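/- arXiv:2207.08183 — 6 statements merged into one kernel-verified Lean document; each statement's English description precedes it below -/
import Mathlib

section
/- Let T be a contraction on H and suppose Q ≥ 0 satisfies T* Q T = Q (so ‖Q^{1/2} T h‖ = ‖Q^{1/2} h‖ for all h). Then the map Q^{1/2} h ↦ Q^{1/2} T h extends to a well-defined isometry V on the closure of the range of Q^{1/2}, and the operator J : H → closure(Ran Q^{1/2}), J h = Q^{1/2} h, satisfies J* J = Q and J T = V J. -/
open ContinuousLinearMap Filter Topology

/-- If `T` is a contraction, `Q ≥ 0` with `T* Q T = Q`, and `S = Q^{1/2}`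
(i.e. `S` positive with `S² = Q`), then `‖S T h‖ = ‖S h‖` for all `h`, the map
`S h ↦ S T h` extends to an isometry `V` on the closure of the range of `S`,
and `J : H → closure(Ran S)`, `J h = S h`, satisfies `J* J = Q` and `J T = V J`. -/
theorem isometry_on_range_of_toeplitz
    {H : Type*} [NormedAddCommGroup H] [InnerProductSpace ℂ H] [CompleteSpace H]
    (T : H →L[ℂ] H) (hT : ‖T‖ ≤ 1)
    (Q : H →L[ℂ] H) (hQ : Q.IsPositive)
    (hTQT : adjoint T ∘L Q ∘L T = Q)
    (S : H →L[ℂ] H) (hS : S.IsPositive) (hSsq : S * S = Q) :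
    (∀ h : H, ‖S (T h)‖ = ‖S h‖) ∧
    ∃ V : (LinearMap.range (S : H →ₗ[ℂ] H)).topologicalClosure →L[ℂ] (LinearMap.range (S : H →ₗ[ℂ] H)).topologicalClosure,
      (∀ x, ‖V x‖ = ‖x‖) ∧
      (∀ (h : H) (x : (LinearMap.range (S : H →ₗ[ℂ] H)).topologicalClosure),
        (x : H) = S h → ((V x : H) = S (T h))) ∧
      ∃ J : H →L[ℂ] (LinearMap.range (S : H →ₗ[ℂ] H)).topologicalClosure,
        (∀ h : H, (J h : H) = S h) ∧
        (∀ h h' : H, (inner ℂ (J h) (J h') : ℂ) = inner ℂ (Q h) h') ∧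
        (∀ h : H, J (T h) = V (J h)) := by
  classical
  have hSadj : ContinuousLinearMap.adjoint S = S := hS.isSelfAdjoint.adjoint_eq
  have hQadj : ContinuousLinearMap.adjoint Q = Q := hQ.isSelfAdjoint.adjoint_eq
  -- key inner product identity
  have hinner : ∀ g g' : H, (inner ℂ (S g) (S g') : ℂ) = inner ℂ (Q g) g' := by
    intro g g'
    calc (inner ℂ (S g) (S g') : ℂ)
        = inner ℂ ((ContinuousLinearMap.adjoint S) g) (S g') := by rw [hSadj]
      _ = inner ℂ g (S (S g')) := adjoint_inner_left S (S g') g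
      _ = inner ℂ g (Q g') := by rw [show S (S g') = Q g' from by rw [← hSsq]; rfl]
      _ = inner ℂ g ((ContinuousLinearMap.adjoint Q) g') := by rw [hQadj]
      _ = inner ℂ (Q g) g' := adjoint_inner_right Q g g'
  have hQinner : ∀ g : H, (inner ℂ (Q (T g)) (T g) : ℂ) = inner ℂ (Q g) g := by
    intro g
    conv_rhs => rw [← hTQT]
    simp only [coe_comp', Function.comp_apply]
    rw [adjoint_inner_left]
  -- norm identity
  have hnorm : ∀ h : H, ‖S (T h)‖ = ‖S h‖ := by
    intro h
    have h1 : (inner ℂ (S (T h)) (S (T h)) : ℂ) = inner ℂ (S h) (S h) := by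
      rw [hinner, hinner, hQinner]
    have h2 : (‖S (T h)‖ : ℝ) ^ 2 = ‖S h‖ ^ 2 := by
      rw [← inner_self_eq_norm_sq (𝕜 := ℂ), ← inner_self_eq_norm_sq (𝕜 := ℂ), h1]
    exact (pow_left_inj₀ (norm_nonneg _) (norm_nonneg _) two_ne_zero).mp h2
  have memP : ∀ h : H, S h ∈ (LinearMap.range (S : H →ₗ[ℂ] H)).topologicalClosure :=
    fun h => Submodule.le_topologicalClosure _ ⟨h, rfl⟩
  -- well-definedness of S h ↦ S T h
  have hwd : ∀ h h' : H, S h = S h' → S (T h) = S (T h') := by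
    intro h h' he
    have h0 : ‖S (T (h - h'))‖ = 0 := by
      rw [hnorm, map_sub, he, sub_self, norm_zero]
    have h1 : S (T h) - S (T h') = 0 := by
      rw [← map_sub, ← map_sub]; exact norm_eq_zero.mp h0
    exact sub_eq_zero.mp h1
  -- the map on range S
  let f0 : (LinearMap.range (S : H →ₗ[ℂ] H)) → (LinearMap.range (S : H →ₗ[ℂ] H)).topologicalClosure :=
    fun x => ⟨S (T x.2.choose), memP _⟩
  have f0spec : ∀ (x : LinearMap.range (S : H →ₗ[ℂ] H)) (h : H), S h = (x : H) →
      ((f0 x : H)) = S (T h) := by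
    intro x h hh
    exact hwd _ _ (x.2.choose_spec.trans hh.symm)
  have hcs : ∀ x : LinearMap.range (S : H →ₗ[ℂ] H), S x.2.choose = (x : H) := fun x => x.2.choose_spec
  have f0norm : ∀ x : LinearMap.range (S : H →ₗ[ℂ] H), ‖f0 x‖ = ‖x‖ := by
    intro x
    have : ‖(f0 x : H)‖ = ‖(x : H)‖ := by
      rw [f0spec x x.2.choose x.2.choose_spec, hnorm, hcs x]
    simpa using this
  let fL : (LinearMap.range (S : H →ₗ[ℂ] H)) →ₗ[ℂ] (LinearMap.range (S : H →ₗ[ℂ] H)).topologicalClosure :=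
    { toFun := f0
      map_add' := by
        intro x y
        apply Subtype.ext
        have hxy : S (x.2.choose + y.2.choose) = ((x + y : LinearMap.range (S : H →ₗ[ℂ] H)) : H) := by
          rw [map_add, hcs x, hcs y]; rfl
        show ((f0 (x + y) : H)) = ((f0 x : H)) + ((f0 y : H))
        rw [f0spec (x + y) _ hxy, map_add, map_add,
          f0spec x x.2.choose x.2.choose_spec, f0spec y y.2.choose y.2.choose_spec]
      map_smul' := by
        intro c x
        apply Subtype.ext
        have hcx : S (c • x.2.choose) = ((c • x : LinearMap.range (S : H →ₗ[ℂ] H)) : H) := by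
          rw [map_smul, hcs x]; rfl
        show ((f0 (c • x) : H)) = c • ((f0 x : H))
        rw [f0spec (c • x) _ hcx, map_smul, map_smul,
          f0spec x x.2.choose x.2.choose_spec] }
  let fC : (LinearMap.range (S : H →ₗ[ℂ] H)) →L[ℂ] (LinearMap.range (S : H →ₗ[ℂ] H)).topologicalClosure :=
    fL.mkContinuous 1 (fun x => by
      show ‖f0 x‖ ≤ 1 * ‖x‖
      rw [f0norm, one_mul])
  -- the inclusion
  let e0 : (LinearMap.range (S : H →ₗ[ℂ] H)) →ₗ[ℂ] (LinearMap.range (S : H →ₗ[ℂ] H)).topologicalClosure :=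
    Submodule.inclusion (Submodule.le_topologicalClosure _)
  have e0norm : ∀ x : LinearMap.range (S : H →ₗ[ℂ] H), ‖e0 x‖ = ‖x‖ := fun x => rfl
  let eC : (LinearMap.range (S : H →ₗ[ℂ] H)) →L[ℂ] (LinearMap.range (S : H →ₗ[ℂ] H)).topologicalClosure :=
    e0.mkContinuous 1 (fun x => by rw [e0norm, one_mul])
  have eCnorm : ∀ x : LinearMap.range (S : H →ₗ[ℂ] H), ‖eC x‖ = ‖x‖ := fun x => rfl
  have eiso : Isometry eC := AddMonoidHomClass.isometry_of_norm eC eCnorm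
  have edense : DenseRange eC := by
    intro y
    rw [Metric.mem_closure_iff]
    intro ε hε
    have hy : (y : H) ∈ closure ((LinearMap.range (S : H →ₗ[ℂ] H) : Submodule ℂ H) : Set H) := by
      have := y.2
      rwa [← Submodule.topologicalClosure_coe]
    obtain ⟨z, hz, hdz⟩ := Metric.mem_closure_iff.mp hy ε hε
    refine ⟨eC ⟨z, hz⟩, ⟨⟨z, hz⟩, rfl⟩, ?_⟩
    show dist (y : H) z < ε
    exact hdz
  haveI : CompleteSpace ((LinearMap.range (S : H →ₗ[ℂ] H)).topologicalClosure : Submodule ℂ H) :=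
    (Submodule.isClosed_topologicalClosure _).isComplete.completeSpace_coe
  let V := fC.extend eC
  have Ve : ∀ x, V (eC x) = fC x := fun x =>
    ContinuousLinearMap.extend_eq (f := fC) (e := eC) edense eiso.isUniformInducing x
  have Vnorm : ∀ y, ‖V y‖ = ‖y‖ := by
    intro y
    refine edense.induction_on y (isClosed_eq (V.continuous.norm) continuous_norm) ?_
    intro x
    rw [Ve x, eCnorm]
    show ‖f0 x‖ = ‖x‖
    exact f0norm x
  have Vspec : ∀ (h : H) (x : (LinearMap.range (S : H →ₗ[ℂ] H)).topologicalClosure),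
      (x : H) = S h → ((V x : H) = S (T h)) := by
    intro h x hx
    have hxe : x = eC ⟨S h, ⟨h, rfl⟩⟩ := Subtype.ext hx
    rw [hxe, Ve]
    exact f0spec ⟨S h, ⟨h, rfl⟩⟩ h rfl
  refine ⟨hnorm, V, Vnorm, Vspec, ?_⟩
  let J : H →L[ℂ] (LinearMap.range (S : H →ₗ[ℂ] H)).topologicalClosure :=
    S.codRestrict _ memP
  have hJ : ∀ h : H, (J h : H) = S h := fun h => rfl
  refine ⟨J, hJ, ?_, ?_⟩
  · intro h h'
    have : (inner ℂ (J h) (J h') : ℂ) = inner ℂ ((J h : H)) ((J h' : H)) := rfl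
    rw [this, hJ, hJ, hinner]
  · intro h
    apply Subtype.ext
    show (J (T h) : H) = (V (J h) : H)
    rw [hJ]
    exact (Vspec h (J h) (hJ h)).symm
end

section
/- Let T = (T₁,…,Tₙ) be commuting contractions on H with P = T₁⋯Tₙ, and let N be a positive operator with Tᵢ* N Tᵢ ≤ N for all i. Then T^{*α} N T^{α} → 0 in SOT as α → ∞ (componentwise) if and only if P^{*k} N P^{k} → 0 in SOT as k → ∞. -/
open ContinuousLinearMap Filter Topology
open scoped InnerProductSpace

private lemma ofFn_prod_mul {M : Type*} [Monoid M] :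
    ∀ {n : ℕ} (f g : Fin n → M), (∀ i j, Commute (g i) (f j)) →
      (List.ofFn fun i => f i * g i).prod = (List.ofFn f).prod * (List.ofFn g).prod
  | 0, f, g, _ => by simp
  | n + 1, f, g, hc => by
    have ih := ofFn_prod_mul (fun i => f i.succ) (fun i => g i.succ)
      (fun i j => hc i.succ j.succ)
    have hcomm : Commute (g 0) (List.ofFn fun i : Fin n => f i.succ).prod := by
      apply Commute.list_prod_right
      intro x hx
      rw [List.mem_ofFn] at hx
      obtain ⟨j, rfl⟩ := hx
      exact hc 0 j.succ
    simp only [List.ofFn_succ, List.prod_cons, ih]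
    rw [mul_assoc (f 0) (g 0), ← mul_assoc (g 0), hcomm.eq, mul_assoc, ← mul_assoc (f 0)]

private lemma ofFn_prod_pow {M : Type*} [Monoid M] {n : ℕ} (f : Fin n → M)
    (hc : ∀ i j, Commute (f i) (f j)) (m : ℕ) :
    ((List.ofFn f).prod) ^ m = (List.ofFn fun i => f i ^ m).prod := by
  induction m with
  | zero => simp
  | succ m ih =>
    rw [pow_succ, ih]
    have := ofFn_prod_mul (fun i => f i ^ m) f (fun i j => (hc i j).pow_right m)
    simp only [pow_succ]
    exact this.symm

private lemma cs_pos {H : Type*} [NormedAddCommGroup H] [InnerProductSpace ℂ H]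
    [CompleteSpace H] {N : H →L[ℂ] H} (hN : N.IsPositive) (x : H) :
    ‖N x‖ ^ 2 ≤ ‖N‖ * RCLike.re ⟪N x, x⟫_ℂ := by
  obtain ⟨p, hp1, -, hp3⟩ :=
    CFC.exists_sqrt_of_isSelfAdjoint_of_quasispectrumRestricts hN.isSelfAdjoint hN.spectrumRestricts
  have hpp : ∀ y, N y = p (p y) := by
    intro y
    rw [← hp3]
    simp [sq, mul_apply_eq_comp]
  have hre : RCLike.re ⟪N x, x⟫_ℂ = ‖p x‖ ^ 2 := by
    rw [hpp x]
    have h0 : (⟪p (p x), x⟫_ℂ) = ⟪p x, p x⟫_ℂ := by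
      calc (⟪p (p x), x⟫_ℂ) = ⟪adjoint p (p x), x⟫_ℂ := by rw [hp1.adjoint_eq]
        _ = ⟪p x, p x⟫_ℂ := adjoint_inner_left _ _ _
    rw [h0, inner_self_eq_norm_sq]
  have hnormN : ‖N‖ = ‖p‖ * ‖p‖ := by
    rw [← hp3, ← CStarRing.norm_star_mul_self (x := p), hp1.star_eq]
  have h1 : ‖N x‖ ≤ ‖p‖ * ‖p x‖ := by
    rw [hpp x]
    exact p.le_opNorm _
  rw [hre, hnormN]
  nlinarith [norm_nonneg (N x), norm_nonneg p, norm_nonneg (p x)]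

/-- For a positive lower `T`-Toeplitz operator `N`, the convergence
`T^{*α} N T^α → 0` in SOT (componentwise `α → ∞`) is equivalent to
`P^{*k} N P^k → 0` in SOT, where `P = T₁⋯Tₙ`. -/
theorem pure_lower_toeplitz_iff_product
    {H : Type*} [NormedAddCommGroup H] [InnerProductSpace ℂ H] [CompleteSpace H]
    (n : ℕ) (T : Fin n → H →L[ℂ] H)
    (hcomm : ∀ i j, Commute (T i) (T j)) (hcontr : ∀ i, ‖T i‖ ≤ 1)
    (P : H →L[ℂ] H) (hP : P = (List.ofFn T).prod)
    (Tpow : (Fin n → ℕ) → H →L[ℂ] H)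
    (hTpow : ∀ α, Tpow α = (List.ofFn fun i => T i ^ α i).prod)
    (N : H →L[ℂ] H) (hN : N.IsPositive)
    (hlower : ∀ i, (N - adjoint (T i) ∘L N ∘L T i).IsPositive) :
    (∀ h : H, Tendsto (fun α : Fin n → ℕ => (adjoint (Tpow α) ∘L N ∘L Tpow α) h)
      atTop (𝓝 0)) ↔
    (∀ h : H, Tendsto (fun k : ℕ => (((adjoint P) ^ k) ∘L N ∘L (P ^ k)) h)
      atTop (𝓝 0)) := by
  constructor
  · intro hL h
    have hdiag : Tendsto (fun k : ℕ => (fun _ : Fin n => k)) atTop atTop := by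
      rw [tendsto_atTop]
      intro b
      filter_upwards [eventually_ge_atTop (Finset.univ.sup b)] with k hk
      exact fun i => le_trans (Finset.le_sup (Finset.mem_univ i)) hk
    have key : ∀ k : ℕ, ((adjoint P) ^ k) ∘L N ∘L (P ^ k)
        = adjoint (Tpow (fun _ => k)) ∘L N ∘L Tpow (fun _ => k) := by
      intro k
      have h1 : Tpow (fun _ => k) = P ^ k := by
        rw [hTpow, hP, ofFn_prod_pow T hcomm]
      rw [h1, ← star_eq_adjoint, ← star_eq_adjoint, ← star_pow]
    have h2 := (hL h).comp hdiag
    simp only [Function.comp_def] at h2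
    simp only [key]
    exact h2
  · intro hR h
    rcases Nat.eq_zero_or_pos n with hn | hn
    · subst hn
      have hP1 : P = 1 := by simp [hP, List.ofFn_zero]
      have hNh : N h = 0 := by
        have hv := hR h
        have hv' : Tendsto (fun _ : ℕ => N h) atTop (𝓝 0) := by
          simpa [hP1, one_pow, ← star_eq_adjoint, star_one] using hv
        exact (tendsto_nhds_unique hv' tendsto_const_nhds).symm
      have hT1 : ∀ α : Fin 0 → ℕ, Tpow α = 1 := by
        intro α; simp [hTpow]
      simp only [hT1, ← star_eq_adjoint, star_one, comp_apply, one_apply_eq_self, hNh, map_zero]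
      exact tendsto_const_nhds
    · haveI : Nonempty (Fin n) := Fin.pos_iff_nonempty.1 hn
      set m : (Fin n → ℕ) → ℕ := fun α => Finset.univ.inf' Finset.univ_nonempty α with hm
      set q : ℕ → ℝ := fun k => RCLike.re ⟪N ((P ^ k) h), (P ^ k) h⟫_ℂ with hqdef
      -- q → 0
      have hq0 : Tendsto q atTop (𝓝 0) := by
        have hv := hR h
        have h1 : Tendsto (fun k => (⟪((((adjoint P) ^ k) ∘L N ∘L (P ^ k)) h : H), h⟫_ℂ))
            atTop (𝓝 (⟪(0 : H), h⟫_ℂ)) := hv.inner tendsto_const_nhds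
        have h2 := (RCLike.continuous_re.tendsto _).comp h1
        simp only [inner_zero_left, map_zero, Function.comp_def] at h2
        have h3 : ∀ k : ℕ, RCLike.re (⟪((((adjoint P) ^ k) ∘L N ∘L (P ^ k)) h : H), h⟫_ℂ)
            = q k := by
          intro k
          simp only [hqdef, comp_apply]
          rw [← star_eq_adjoint, ← star_pow, star_eq_adjoint, adjoint_inner_left]
        simpa only [h3] using h2
      -- Good predicate
      have gd_T : ∀ i x, RCLike.re ⟪N (T i x), T i x⟫_ℂ ≤ RCLike.re ⟪N x, x⟫_ℂ := by
        intro i x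
        have := (hlower i).re_inner_nonneg_left x
        simp only [sub_apply, comp_apply, inner_sub_left, map_sub] at this
        rw [adjoint_inner_left] at this
        linarith
      have gd_pow : ∀ i k x,
          RCLike.re ⟪N ((T i ^ k) x), (T i ^ k) x⟫_ℂ ≤ RCLike.re ⟪N x, x⟫_ℂ := by
        intro i k
        induction k with
        | zero => intro x; simp
        | succ k ih =>
          intro x
          have h1 : (T i ^ (k + 1)) x = (T i ^ k) (T i x) := by
            rw [pow_succ, mul_apply_eq_comp]
          rw [h1]
          exact le_trans (ih (T i x)) (gd_T i x)
      have gd_prod : ∀ l : List (H →L[ℂ] H),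
          (∀ Q ∈ l, ∀ x, RCLike.re ⟪N (Q x), Q x⟫_ℂ ≤ RCLike.re ⟪N x, x⟫_ℂ) →
          ∀ x, RCLike.re ⟪N (l.prod x), l.prod x⟫_ℂ ≤ RCLike.re ⟪N x, x⟫_ℂ := by
        intro l
        induction l with
        | nil => intro _ x; simp
        | cons A l ih =>
          intro hl x
          have h1 : (A :: l).prod x = A (l.prod x) := by rw [List.prod_cons, mul_apply_eq_comp]
          rw [h1]
          exact le_trans (hl A (List.mem_cons_self) _)
            (ih (fun Q hQ => hl Q (List.mem_cons_of_mem _ hQ)) x)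
      -- decomposition
      have decomp : ∀ α : Fin n → ℕ,
          Tpow α = Tpow (fun i => α i - m α) * (P ^ (m α)) := by
        intro α
        have h1 : P ^ (m α) = Tpow (fun _ => m α) := by
          rw [hTpow, hP, ofFn_prod_pow T hcomm]
        have h2 : ∀ i, T i ^ α i = T i ^ (α i - m α) * T i ^ (m α) := by
          intro i
          rw [← pow_add, Nat.sub_add_cancel (Finset.inf'_le _ (Finset.mem_univ i))]
        rw [h1, hTpow, hTpow, hTpow]
        calc (List.ofFn fun i => T i ^ α i).prod
            = (List.ofFn fun i => T i ^ (α i - m α) * T i ^ (m α)).prod := by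
              simp only [← h2]
          _ = _ := ofFn_prod_mul _ _ (fun i j => (hcomm i j).pow_pow _ _)
      have hkey : ∀ α : Fin n → ℕ,
          RCLike.re ⟪N (Tpow α h), Tpow α h⟫_ℂ ≤ q (m α) := by
        intro α
        have hS : ∀ x, RCLike.re ⟪N ((Tpow (fun i => α i - m α)) x),
            (Tpow (fun i => α i - m α)) x⟫_ℂ ≤ RCLike.re ⟪N x, x⟫_ℂ := by
          rw [hTpow]
          apply gd_prod
          intro Q hQ
          rw [List.mem_ofFn] at hQ
          obtain ⟨i, rfl⟩ := hQ
          exact gd_pow i _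
        have h1 : Tpow α h = (Tpow (fun i => α i - m α)) ((P ^ (m α)) h) := by
          rw [decomp α, mul_apply_eq_comp]
        rw [h1]
        exact hS _
      -- norm of Tpow ≤ 1
      have hTipow : ∀ i (k : ℕ), ‖T i ^ k‖ ≤ 1 := by
        intro i k
        induction k with
        | zero => simpa [one_def] using (norm_id_le : ‖ContinuousLinearMap.id ℂ H‖ ≤ 1)
        | succ k ih =>
          rw [pow_succ]
          calc ‖T i ^ k * T i‖ ≤ ‖T i ^ k‖ * ‖T i‖ := norm_mul_le _ _
            _ ≤ 1 := by nlinarith [norm_nonneg (T i ^ k), hcontr i]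
      have hQ1 : ∀ α : Fin n → ℕ, ‖Tpow α‖ ≤ 1 := by
        intro α
        rw [hTpow]
        have : ∀ l : List (H →L[ℂ] H), (∀ A ∈ l, ‖A‖ ≤ 1) → ‖l.prod‖ ≤ 1 := by
          intro l
          induction l with
          | nil => intro _; simpa [one_def] using (norm_id_le : ‖ContinuousLinearMap.id ℂ H‖ ≤ 1)
          | cons A l ih =>
            intro hl
            rw [List.prod_cons]
            calc ‖A * l.prod‖ ≤ ‖A‖ * ‖l.prod‖ := norm_mul_le _ _
              _ ≤ 1 := by
                have h1 := hl A (List.mem_cons_self)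
                have h2 := ih (fun B hB => hl B (List.mem_cons_of_mem _ hB))
                nlinarith [norm_nonneg A, norm_nonneg l.prod]
        apply this
        intro A hA
        rw [List.mem_ofFn] at hA
        obtain ⟨i, rfl⟩ := hA
        exact hTipow i _
      -- main bound
      have hb : ∀ α : Fin n → ℕ, ‖(adjoint (Tpow α) ∘L N ∘L Tpow α) h‖
          ≤ Real.sqrt (‖N‖ * q (m α)) := by
        intro α
        have h1 : ‖(adjoint (Tpow α) ∘L N ∘L Tpow α) h‖ ≤ ‖N (Tpow α h)‖ := by
          simp only [comp_apply]
          calc ‖adjoint (Tpow α) (N (Tpow α h))‖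
              ≤ ‖adjoint (Tpow α)‖ * ‖N (Tpow α h)‖ := le_opNorm _ _
            _ ≤ 1 * ‖N (Tpow α h)‖ := by
                apply mul_le_mul_of_nonneg_right _ (norm_nonneg _)
                rw [← star_eq_adjoint, norm_star]
                exact hQ1 α
            _ = ‖N (Tpow α h)‖ := one_mul _
        refine le_trans h1 ?_
        have hq_nonneg : 0 ≤ q (m α) := by
          simpa [hqdef] using hN.re_inner_nonneg_left ((P ^ (m α)) h)
        rw [Real.le_sqrt (norm_nonneg _) (by positivity)]
        calc ‖N (Tpow α h)‖ ^ 2 ≤ ‖N‖ * RCLike.re ⟪N (Tpow α h), Tpow α h⟫_ℂ :=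
              cs_pos hN _
          _ ≤ ‖N‖ * q (m α) :=
              mul_le_mul_of_nonneg_left (hkey α) (norm_nonneg N)
      -- m → ∞
      have hmt : Tendsto m atTop atTop := by
        rw [tendsto_atTop]
        intro b
        filter_upwards [eventually_ge_atTop (fun _ : Fin n => b)] with α hα
        exact Finset.le_inf' _ _ fun i _ => hα i
      have hb0 : Tendsto (fun α : Fin n → ℕ => Real.sqrt (‖N‖ * q (m α)))
          atTop (𝓝 0) := by
        have h2 : Tendsto (fun k => Real.sqrt (‖N‖ * q k)) atTop (𝓝 0) := by
          have h3 : Tendsto (fun k => ‖N‖ * q k) atTop (𝓝 0) := by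
            have h5 := hq0.const_mul ‖N‖
            rwa [mul_zero] at h5
          have h4 := (Real.continuous_sqrt.tendsto 0).comp h3
          rw [Real.sqrt_zero] at h4
          exact h4
        exact h2.comp hmt
      rw [tendsto_zero_iff_norm_tendsto_zero]
      exact squeeze_zero (fun α => norm_nonneg _) hb hb0
end

section
/- Let Q, R, S, T ∈ B(H) with QT = TQ, let V : closure(Ran R) → E be an isometry into a Hilbert space E, and suppose π : H → H²_{Ran R}(𝔻), h ↦ Σ_k z^k R Q^k h, is bounded. If W = [[A, B],[C, 0]] : E ⊕ (Ẽ ⊕ closure(Ran S)) → E ⊕ (Ẽ ⊕ closure(Ran S)) is a unitary with W(VRh, 0, SQh) = (VRTh, 0, Sh) for all h ∈ H, then the multiplier Φ(z) = A* + z C* B* satisfies Π T = M_Φ* Π, where Π = (I ⊗ V) π. -/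
open ContinuousLinearMap Filter Topology
open scoped InnerProductSpace ENNReal NNReal

noncomputable section TransferAux

namespace TransferAux

variable {E : Type*} [NormedAddCommGroup E] [InnerProductSpace ℂ E] [CompleteSpace E]

lemma rpow_two_eq (x : ℝ) : x ^ ((2 : ℝ≥0∞).toReal) = x ^ 2 := by
  rw [show ((2:ℝ≥0∞).toReal) = ((2:ℕ):ℝ) by norm_num, Real.rpow_natCast]

lemma summable_sq (f : lp (fun _ : ℕ => E) 2) : Summable fun k => ‖f k‖ ^ 2 := by
  have h := lp.memℓp f
  rw [memℓp_gen_iff (by norm_num : (0:ℝ) < (2:ℝ≥0∞).toReal)] at h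
  simpa [rpow_two_eq] using h

lemma memℓp_of_sq {f : ℕ → E} (h : Summable fun k => ‖f k‖ ^ 2) : Memℓp f 2 := by
  apply memℓp_gen
  simpa [rpow_two_eq] using h

lemma norm_sq_eq (f : lp (fun _ : ℕ => E) 2) : ‖f‖ ^ 2 = ∑' k, ‖f k‖ ^ 2 := by
  have h := lp.norm_rpow_eq_tsum (p := 2) (by norm_num : (0:ℝ) < (2:ℝ≥0∞).toReal) f
  simpa [rpow_two_eq] using h

lemma norm_le_of_sq {f : lp (fun _ : ℕ => E) 2} {c : ℝ} (hc : 0 ≤ c)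
    (h : ∑' k, ‖f k‖ ^ 2 ≤ c ^ 2) : ‖f‖ ≤ c := by
  have h2 : ‖f‖ ^ 2 ≤ c ^ 2 := by rw [norm_sq_eq]; exact h
  nlinarith [norm_nonneg f]

lemma summable_comp_sq {F' : Type*} [NormedAddCommGroup F'] [NormedSpace ℂ F']
    (X : E →L[ℂ] F') (f : lp (fun _ : ℕ => E) 2) :
    Summable fun k => ‖X (f k)‖ ^ 2 := by
  refine Summable.of_nonneg_of_le (fun k => by positivity) (fun k => ?_)
    ((summable_sq f).mul_left (‖X‖ ^ 2))
  have h := X.le_opNorm (f k)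
  nlinarith [norm_nonneg (X (f k)), norm_nonneg (f k), norm_nonneg X]

/-- Diagonal operator on `ℓ²(ℕ, E)`. -/
def diagOp (X : E →L[ℂ] E) :
    lp (fun _ : ℕ => E) 2 →L[ℂ] lp (fun _ : ℕ => E) 2 :=
  LinearMap.mkContinuous
    { toFun := fun f => ⟨fun k => X (f k), memℓp_of_sq (summable_comp_sq X f)⟩
      map_add' := fun f g => by
        apply lp.ext; funext k
        show X ((f + g) k) = X (f k) + X (g k)
        rw [lp.coeFn_add]; simp
      map_smul' := fun c f => by
        apply lp.ext; funext k
        show X ((c • f) k) = c • X (f k)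
        rw [lp.coeFn_smul]; simp }
    ‖X‖ (fun f => by
      refine norm_le_of_sq (by positivity) ?_
      have h1 : ∀ k, ‖X (f k)‖ ^ 2 ≤ ‖X‖ ^ 2 * ‖f k‖ ^ 2 := fun k => by
        have h := X.le_opNorm (f k)
        nlinarith [norm_nonneg (X (f k)), norm_nonneg (f k), norm_nonneg X]
      calc (∑' k, ‖X (f k)‖ ^ 2) ≤ ∑' k, ‖X‖ ^ 2 * ‖f k‖ ^ 2 :=
            Summable.tsum_le_tsum h1 (summable_comp_sq X f) ((summable_sq f).mul_left _)
        _ = ‖X‖ ^ 2 * ∑' k, ‖f k‖ ^ 2 := tsum_mul_left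
        _ = (‖X‖ * ‖f‖) ^ 2 := by rw [← norm_sq_eq]; ring)

@[simp] lemma diagOp_apply (X : E →L[ℂ] E) (f : lp (fun _ : ℕ => E) 2) (k : ℕ) :
    diagOp X f k = X (f k) := rfl

/-- The shifted sequence. -/
def shiftFun (f : ℕ → E) : ℕ → E
  | 0 => 0
  | (n+1) => f n

lemma summable_shift {f : ℕ → E} (h : Summable fun k => ‖f k‖ ^ 2) :
    Summable fun k => ‖shiftFun f k‖ ^ 2 := by
  apply (summable_nat_add_iff 1).mp
  simpa [shiftFun] using h

lemma tsum_shift {f : ℕ → E} (h : Summable fun k => ‖f k‖ ^ 2) :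
    ∑' k, ‖shiftFun f k‖ ^ 2 = ∑' k, ‖f k‖ ^ 2 := by
  rw [Summable.tsum_eq_zero_add (summable_shift h)]
  simp [shiftFun]

/-- Forward (up) shift on `ℓ²(ℕ, E)`. -/
def shiftUp : lp (fun _ : ℕ => E) 2 →L[ℂ] lp (fun _ : ℕ => E) 2 :=
  LinearMap.mkContinuous
    { toFun := fun f => ⟨shiftFun f, memℓp_of_sq (summable_shift (summable_sq f))⟩
      map_add' := fun f g => by
        apply lp.ext; funext k
        show shiftFun (⇑(f + g)) k = shiftFun (⇑f) k + shiftFun (⇑g) k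
        cases k with
        | zero => simp [shiftFun]
        | succ n => simp [shiftFun, lp.coeFn_add]
      map_smul' := fun c f => by
        apply lp.ext; funext k
        show shiftFun (⇑(c • f)) k = c • shiftFun (⇑f) k
        cases k with
        | zero => simp [shiftFun]
        | succ n => simp [shiftFun, lp.coeFn_smul] }
    1 (fun f => by
      rw [one_mul]
      refine norm_le_of_sq (norm_nonneg f) ?_
      refine le_of_eq ?_
      show ∑' k, ‖shiftFun (⇑f) k‖ ^ 2 = ‖f‖ ^ 2
      rw [tsum_shift (summable_sq f), ← norm_sq_eq])

@[simp] lemma shiftUp_apply_zero (f : lp (fun _ : ℕ => E) 2) :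
    shiftUp f 0 = 0 := rfl

@[simp] lemma shiftUp_apply_succ (f : lp (fun _ : ℕ => E) 2) (k : ℕ) :
    shiftUp f (k + 1) = f k := rfl

/-- Backward (down) shift on `ℓ²(ℕ, E)`. -/
def shiftDown : lp (fun _ : ℕ => E) 2 →L[ℂ] lp (fun _ : ℕ => E) 2 :=
  LinearMap.mkContinuous
    { toFun := fun f => ⟨fun k => f (k + 1),
        memℓp_of_sq ((summable_nat_add_iff 1).mpr (summable_sq f))⟩
      map_add' := fun f g => by
        apply lp.ext; funext k
        show (f + g) (k + 1) = f (k + 1) + g (k + 1)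
        rw [lp.coeFn_add]; simp
      map_smul' := fun c f => by
        apply lp.ext; funext k
        show (c • f) (k + 1) = c • f (k + 1)
        rw [lp.coeFn_smul]; simp }
    1 (fun f => by
      rw [one_mul]
      refine norm_le_of_sq (norm_nonneg f) ?_
      show ∑' k, ‖f (k + 1)‖ ^ 2 ≤ ‖f‖ ^ 2
      have hs := summable_sq f
      have h0 := Summable.tsum_eq_zero_add hs
      rw [norm_sq_eq, h0]
      have : (0:ℝ) ≤ ‖f 0‖ ^ 2 := by positivity
      linarith)

@[simp] lemma shiftDown_apply (f : lp (fun _ : ℕ => E) 2) (k : ℕ) :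
    shiftDown f k = f (k + 1) := rfl

lemma diagOp_adjoint (X : E →L[ℂ] E) :
    adjoint (diagOp X) = diagOp (adjoint X) := by
  symm
  rw [eq_adjoint_iff]
  intro g f
  rw [lp.inner_eq_tsum, lp.inner_eq_tsum]
  refine tsum_congr fun k => ?_
  simp [adjoint_inner_left]

lemma shiftDown_adjoint :
    adjoint (shiftDown (E := E)) = shiftUp := by
  symm
  rw [eq_adjoint_iff]
  intro u g
  rw [lp.inner_eq_tsum, lp.inner_eq_tsum,
    Summable.tsum_eq_zero_add (lp.summable_inner (𝕜 := ℂ) (shiftUp u) g)]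
  simp

lemma shiftUp_adjoint :
    adjoint (shiftUp (E := E)) = shiftDown := by
  rw [← shiftDown_adjoint, adjoint_adjoint]

lemma MOp_apply_zero (X Y : E →L[ℂ] E) (f : lp (fun _ : ℕ => E) 2) :
    (diagOp X + shiftUp ∘L diagOp Y) f 0 = X (f 0) := by
  rw [ContinuousLinearMap.add_apply, ContinuousLinearMap.comp_apply, lp.coeFn_add, Pi.add_apply,
    diagOp_apply, shiftUp_apply_zero, add_zero]

lemma MOp_apply_succ (X Y : E →L[ℂ] E) (f : lp (fun _ : ℕ => E) 2) (k : ℕ) :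
    (diagOp X + shiftUp ∘L diagOp Y) f (k + 1) = X (f (k + 1)) + Y (f k) := by
  rw [ContinuousLinearMap.add_apply, ContinuousLinearMap.comp_apply, lp.coeFn_add, Pi.add_apply,
    diagOp_apply, shiftUp_apply_succ, diagOp_apply]

lemma NOp_apply (X Y : E →L[ℂ] E) (f : lp (fun _ : ℕ => E) 2) (k : ℕ) :
    (diagOp X + diagOp Y ∘L shiftDown) f k = X (f k) + Y (f (k + 1)) := by
  rw [ContinuousLinearMap.add_apply, ContinuousLinearMap.comp_apply, lp.coeFn_add, Pi.add_apply,
    diagOp_apply, diagOp_apply, shiftDown_apply]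

lemma MOp_norm (X Y : E →L[ℂ] E)
    (hXY : ∀ x y : E, ⟪X x, Y y⟫_ℂ = 0)
    (hnorm : ∀ x : E, ‖X x‖ ^ 2 + ‖Y x‖ ^ 2 = ‖x‖ ^ 2)
    (f : lp (fun _ : ℕ => E) 2) :
    ‖(diagOp X + shiftUp ∘L diagOp Y) f‖ = ‖f‖ := by
  set g := (diagOp X + shiftUp ∘L diagOp Y) f with hg
  have hg0 : g 0 = X (f 0) := MOp_apply_zero X Y f
  have hgs : ∀ k, g (k + 1) = X (f (k + 1)) + Y (f k) := fun k => MOp_apply_succ X Y f k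
  have hptw : ∀ k, ‖g (k + 1)‖ ^ 2 = ‖X (f (k + 1))‖ ^ 2 + ‖Y (f k)‖ ^ 2 := fun k => by
    rw [hgs k, norm_add_sq (𝕜 := ℂ), hXY]
    simp
  have hsA : Summable fun k => ‖X (f k)‖ ^ 2 := summable_comp_sq X f
  have hsY : Summable fun k => ‖Y (f k)‖ ^ 2 := summable_comp_sq Y f
  have hts : ∑' k, ‖g k‖ ^ 2 = ‖f‖ ^ 2 := by
    rw [Summable.tsum_eq_zero_add (summable_sq g)]
    calc ‖g 0‖ ^ 2 + ∑' k, ‖g (k + 1)‖ ^ 2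
        = ‖X (f 0)‖ ^ 2 + ∑' k, (‖X (f (k + 1))‖ ^ 2 + ‖Y (f k)‖ ^ 2) := by
          rw [hg0]; congr 1; exact tsum_congr hptw
      _ = ‖X (f 0)‖ ^ 2 + ((∑' k, ‖X (f (k + 1))‖ ^ 2) + ∑' k, ‖Y (f k)‖ ^ 2) := by
          rw [Summable.tsum_add ((summable_nat_add_iff 1).mpr hsA) hsY]
      _ = (‖X (f 0)‖ ^ 2 + ∑' k, ‖X (f (k + 1))‖ ^ 2) + ∑' k, ‖Y (f k)‖ ^ 2 := by ring
      _ = (∑' k, ‖X (f k)‖ ^ 2) + ∑' k, ‖Y (f k)‖ ^ 2 := by rw [← Summable.tsum_eq_zero_add hsA]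
      _ = ∑' k, (‖X (f k)‖ ^ 2 + ‖Y (f k)‖ ^ 2) := (Summable.tsum_add hsA hsY).symm
      _ = ∑' k, ‖f k‖ ^ 2 := tsum_congr fun k => hnorm (f k)
      _ = ‖f‖ ^ 2 := (norm_sq_eq f).symm
  have hsq : ‖g‖ ^ 2 = ‖f‖ ^ 2 := by rw [norm_sq_eq g, hts]
  have h2 := congrArg Real.sqrt hsq
  rwa [Real.sqrt_sq (norm_nonneg g), Real.sqrt_sq (norm_nonneg f)] at h2

lemma MOp_adjoint (X Y : E →L[ℂ] E) :
    adjoint (diagOp X + shiftUp ∘L diagOp Y) =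
      diagOp (adjoint X) + diagOp (adjoint Y) ∘L shiftDown := by
  rw [map_add, adjoint_comp, diagOp_adjoint, diagOp_adjoint, shiftUp_adjoint]

end TransferAux

end TransferAux

set_option maxHeartbeats 2000000 in
open TransferAux in
/-- Transfer-function lemma: if `W = [[A,B],[C,0]]` is a unitary on `E ⊕ F`
(`F` playing the role of `Ẽ ⊕ closure(Ran S)`, with `S : H → F` the map
`h ↦ (0, Sh)`) satisfying `W(VRh, SQh) = (VRTh, Sh)`, then the inner multiplier
`Φ(z) = A* + z C* B*` satisfies `Pc T = M_Φ* Π`, where `Π = (I ⊗ V) π` and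
`π h = Σ_k z^k R Q^k h`. -/
theorem transfer_function_lemma
    {H : Type*} [NormedAddCommGroup H] [InnerProductSpace ℂ H] [CompleteSpace H]
    {E : Type*} [NormedAddCommGroup E] [InnerProductSpace ℂ E] [CompleteSpace E]
    {F : Type*} [NormedAddCommGroup F] [InnerProductSpace ℂ F] [CompleteSpace F]
    (Q R S' T' : H →L[ℂ] H) (hQT : Q ∘L T' = T' ∘L Q)
    (V : H →L[ℂ] E) (hV : ∀ h : H, ‖V (R h)‖ = ‖R h‖)
    (S : H →L[ℂ] F) -- the map h ↦ (0_Ẽ, S' h) into F = Ẽ ⊕ closure(Ran S')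
    (A : E →L[ℂ] E) (B : F →L[ℂ] E) (C : E →L[ℂ] F)
    (W : WithLp 2 (E × F) →L[ℂ] WithLp 2 (E × F))
    (hWblock : ∀ (e : E) (f : F),
      W ((WithLp.equiv 2 (E × F)).symm (e, f)) =
        (WithLp.equiv 2 (E × F)).symm (A e + B f, C e))
    (hWiso : ∀ x, ‖W x‖ = ‖x‖) (hWsurj : Function.Surjective W)
    (hWint : ∀ h : H,
      W ((WithLp.equiv 2 (E × F)).symm (V (R h), S (Q h))) =
        (WithLp.equiv 2 (E × F)).symm (V (R (T' h)), S h))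
    (π : H →L[ℂ] lp (fun _ : ℕ => H) 2)
    (hπ : ∀ (h : H) (k : ℕ), π h k = R ((Q ^ k) h))
    (Pc : H →L[ℂ] lp (fun _ : ℕ => E) 2)
    (hPc : ∀ (h : H) (k : ℕ), Pc h k = V (R ((Q ^ k) h))) :
    ∃ MΦ : lp (fun _ : ℕ => E) 2 →L[ℂ] lp (fun _ : ℕ => E) 2,
      (∀ f, ‖MΦ f‖ = ‖f‖) ∧
      (∀ f, MΦ f 0 = adjoint A (f 0)) ∧
      (∀ f (k : ℕ), MΦ f (k + 1) = adjoint A (f (k + 1)) + adjoint C (adjoint B (f k))) ∧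
      Pc ∘L T' = adjoint MΦ ∘L Pc := by
  classical
  -- W preserves inner products
  have hinner : ∀ x y : WithLp 2 (E × F), ⟪W x, W y⟫_ℂ = ⟪x, y⟫_ℂ := fun x y =>
    LinearIsometry.inner_map_map ⟨(W : WithLp 2 (E × F) →ₗ[ℂ] WithLp 2 (E × F)), hWiso⟩ x y
  have hWadj1 : ∀ x, adjoint W (W x) = x := by
    intro x
    apply ext_inner_right ℂ
    intro y
    rw [adjoint_inner_left]
    exact hinner x y
  have hWadj2 : ∀ z, W (adjoint W z) = z := by
    intro z
    obtain ⟨x, rfl⟩ := hWsurj z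
    rw [hWadj1]
  have hsymm_inj := (WithLp.equiv 2 (E × F)).symm.injective
  -- block form of the adjoint of W
  have hadjblock : ∀ (e : E) (f : F),
      adjoint W ((WithLp.equiv 2 (E × F)).symm (e, f)) =
        (WithLp.equiv 2 (E × F)).symm (adjoint A e + adjoint C f, adjoint B e) := by
    intro e f
    apply ext_inner_right ℂ
    intro y
    have hy : (WithLp.equiv 2 (E × F)).symm ((WithLp.equiv 2 (E × F)) y) = y :=
      (WithLp.equiv 2 (E × F)).symm_apply_apply y
    rw [adjoint_inner_left, ← hy, hWblock]
    simp only [WithLp.prod_inner_apply, WithLp.equiv_symm_apply, WithLp.ofLp_toLp,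
      inner_add_left, inner_add_right, adjoint_inner_left]
    ring
  -- the relations coming from `W W* = 1`
  have hWNid : ∀ (e : E) (f : F),
      A (adjoint A e + adjoint C f) + B (adjoint B e) = e ∧
        C (adjoint A e + adjoint C f) = f := by
    intro e f
    have h := hWadj2 ((WithLp.equiv 2 (E × F)).symm (e, f))
    rw [hadjblock, hWblock] at h
    have h' := hsymm_inj h
    exact ⟨congrArg Prod.fst h', congrArg Prod.snd h'⟩
  have hCA : ∀ e : E, C (adjoint A e) = 0 := fun e => by
    have h := (hWNid e 0).2
    simpa using h
  have hCC : ∀ f : F, C (adjoint C f) = f := fun f => by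
    have h := (hWNid 0 f).2
    simpa using h
  have hABB : ∀ e : E, A (adjoint A e) + B (adjoint B e) = e := fun e => by
    have h := (hWNid e 0).1
    simpa using h
  -- the intertwining relation
  have hSh : ∀ h : H, C (V (R h)) = S h := fun h => by
    have hw := hWint h
    rw [hWblock] at hw
    exact congrArg Prod.snd (hsymm_inj hw)
  have hmain : ∀ h : H, V (R (T' h)) = A (V (R h)) + B (C (V (R (Q h)))) := fun h => by
    have hw := hWint h
    rw [hWblock] at hw
    have h1 := congrArg Prod.fst (hsymm_inj hw)
    rw [← hSh (Q h)] at h1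
    exact h1.symm
  -- scalar identities
  have hsqE : ∀ x : E, ‖adjoint A x‖ ^ 2 + ‖adjoint B x‖ ^ 2 = ‖x‖ ^ 2 := fun x => by
    have h1 : ⟪adjoint A x, adjoint A x⟫_ℂ + ⟪adjoint B x, adjoint B x⟫_ℂ = ⟪x, x⟫_ℂ := by
      rw [adjoint_inner_right, adjoint_inner_right, ← inner_add_left, hABB]
    rw [inner_self_eq_norm_sq_to_K, inner_self_eq_norm_sq_to_K,
      inner_self_eq_norm_sq_to_K] at h1
    exact_mod_cast h1
  have hsqC : ∀ u : F, ‖adjoint C u‖ ^ 2 = ‖u‖ ^ 2 := fun u => by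
    have h1 : ⟪adjoint C u, adjoint C u⟫_ℂ = ⟪u, u⟫_ℂ := by
      rw [adjoint_inner_right, hCC]
    rw [inner_self_eq_norm_sq_to_K, inner_self_eq_norm_sq_to_K] at h1
    exact_mod_cast h1
  have hcross : ∀ x y : E, ⟪adjoint A x, (adjoint C ∘L adjoint B) y⟫_ℂ = 0 := fun x y => by
    show ⟪adjoint A x, adjoint C (adjoint B y)⟫_ℂ = 0
    rw [adjoint_inner_right, hCA]
    simp
  have hnorm' : ∀ x : E, ‖adjoint A x‖ ^ 2 + ‖(adjoint C ∘L adjoint B) x‖ ^ 2 = ‖x‖ ^ 2 := by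
    intro x
    have : ‖(adjoint C ∘L adjoint B) x‖ ^ 2 = ‖adjoint B x‖ ^ 2 := hsqC (adjoint B x)
    rw [this]
    exact hsqE x
  -- commutation of powers
  have hcomm : ∀ (k : ℕ) (h : H), (Q ^ k) (T' h) = T' ((Q ^ k) h) := by
    intro k h
    have hc : Commute Q T' := by
      rw [Commute, SemiconjBy, ContinuousLinearMap.mul_def, ContinuousLinearMap.mul_def]
      exact hQT
    have h2 := (hc.pow_left k).eq
    calc (Q ^ k) (T' h) = ((Q ^ k) * T') h := rfl
      _ = (T' * (Q ^ k)) h := by rw [h2]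
      _ = T' ((Q ^ k) h) := rfl
  refine ⟨diagOp (adjoint A) + shiftUp ∘L diagOp (adjoint C ∘L adjoint B), ?_, ?_, ?_, ?_⟩
  · exact fun f => MOp_norm _ _ hcross hnorm' f
  · exact fun f => MOp_apply_zero _ _ f
  · exact fun f k => MOp_apply_succ _ _ f k
  · rw [MOp_adjoint, adjoint_adjoint, adjoint_comp, adjoint_adjoint, adjoint_adjoint]
    refine ContinuousLinearMap.ext fun h => ?_
    apply lp.ext; funext k
    have hrhs : ((diagOp A + diagOp (B ∘L C) ∘L shiftDown) ∘L Pc) h k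
        = A (Pc h k) + (B ∘L C) (Pc h (k + 1)) := by
      rw [ContinuousLinearMap.comp_apply]
      exact NOp_apply A (B ∘L C) (Pc h) k
    have hpow : (Q ^ (k + 1)) h = Q ((Q ^ k) h) := by
      rw [pow_succ']; rfl
    show (Pc (T' h)) k = _
    rw [hrhs, hPc, hPc, hPc, hcomm k h, hmain ((Q ^ k) h), hpow]
    rfl
end

section
/- Let E be a Hilbert space, U a unitary on E, and P an orthogonal projection on E. Define Φ₁(z) = (P + zP^⊥)U* and Φ₂(z) = U(P^⊥ + zP). If additionally U P U* commutes appropriately so that Φ₁(z)Φ₂(z) = z I_E, then Φ₂(z)Φ₁(z) = z I_E as well, and the multiplication operators M_{Φ₁}, M_{Φ₂} on H²_E(𝔻) are commuting isometries with M_{Φ₁} M_{Φ₂} = M_z. -/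
open ContinuousLinearMap Filter Topology

noncomputable section BCLaux

open scoped InnerProductSpace ENNReal NNReal

variable {E : Type*} [NormedAddCommGroup E] [InnerProductSpace ℂ E] [CompleteSpace E]

/-- shift-by-one helper: `BCLprev f 0 = 0`, `BCLprev f (k+1) = f k`. -/
def BCLprev (f : ℕ → E) : ℕ → E
  | 0 => 0
  | (k+1) => f k

@[simp] lemma BCLprev_zero (f : ℕ → E) : BCLprev f 0 = 0 := rfl
@[simp] lemma BCLprev_succ (f : ℕ → E) (k : ℕ) : BCLprev f (k+1) = f k := rfl

lemma BCLprev_add (f g : ℕ → E) (k : ℕ) :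
    BCLprev (f + g) k = BCLprev f k + BCLprev g k := by
  cases k <;> simp

lemma BCLprev_smul (c : ℂ) (f : ℕ → E) (k : ℕ) :
    BCLprev (c • f) k = c • BCLprev f k := by
  cases k <;> simp

lemma BCL_hasSum (S T : E →L[ℂ] E)
    (hST : ∀ x y : E, ⟪S x, T y⟫_ℂ = 0)
    (hnorm : ∀ x : E, ‖S x‖ ^ 2 + ‖T x‖ ^ 2 = ‖x‖ ^ 2)
    (f : ℕ → E) {A : ℝ} (hf : HasSum (fun k => ‖f k‖ ^ 2) A) :
    HasSum (fun k => ‖S (f k) + T (BCLprev f k)‖ ^ 2) A := by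
  have hpt : ∀ x y : E, ‖S x + T y‖ ^ 2 = ‖S x‖ ^ 2 + ‖T y‖ ^ 2 := by
    intro x y
    have := norm_add_sq_eq_norm_sq_add_norm_sq_of_inner_eq_zero (S x) (T y) (hST x y)
    nlinarith [this]
  have hSsum : Summable (fun k => ‖S (f k)‖ ^ 2) := by
    refine Summable.of_nonneg_of_le (fun k => by positivity) (fun k => ?_) hf.summable
    nlinarith [hnorm (f k), sq_nonneg ‖T (f k)‖]
  have hS := hSsum.hasSum
  set a := ∑' k, ‖S (f k)‖ ^ 2 with ha
  have hsum : HasSum (fun k => ‖S (f k)‖ ^ 2 + ‖T (f k)‖ ^ 2) A := by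
    convert hf using 2 with k
    exact hnorm (f k)
  have hT' : HasSum (fun k => ‖T (f k)‖ ^ 2) (A - a) := by
    simpa using hsum.sub hS
  have hT : HasSum (fun k => ‖T (BCLprev f k)‖ ^ 2) (A - a) := by
    have h0 : ‖T (BCLprev f 0)‖ ^ 2 = 0 := by simp
    refine (hasSum_nat_add_iff' (f := fun k => ‖T (BCLprev f k)‖ ^ 2) 1).1 ?_
    simpa [h0] using hT'
  have := hS.add hT
  simp only [add_sub_cancel] at this
  convert this using 2 with k
  exact hpt (f k) (BCLprev f k)

lemma BCL_hasSum_lp (S T : E →L[ℂ] E)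
    (hST : ∀ x y : E, ⟪S x, T y⟫_ℂ = 0)
    (hnorm : ∀ x : E, ‖S x‖ ^ 2 + ‖T x‖ ^ 2 = ‖x‖ ^ 2)
    (f : lp (fun _ : ℕ => E) 2) :
    HasSum (fun k => ‖S (f k) + T (BCLprev (⇑f) k)‖ ^ 2) (‖f‖ ^ 2) := by
  have hp : (0:ℝ) < (2 : ℝ≥0∞).toReal := by norm_num
  have hf := lp.hasSum_norm hp f
  have h2 : (2 : ℝ≥0∞).toReal = (2:ℕ) := by norm_num
  simp only [h2, Real.rpow_natCast] at hf
  exact BCL_hasSum S T hST hnorm (⇑f) hf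

lemma BCL_memℓp (S T : E →L[ℂ] E)
    (hST : ∀ x y : E, ⟪S x, T y⟫_ℂ = 0)
    (hnorm : ∀ x : E, ‖S x‖ ^ 2 + ‖T x‖ ^ 2 = ‖x‖ ^ 2)
    (f : lp (fun _ : ℕ => E) 2) :
    Memℓp (fun k => S (f k) + T (BCLprev (⇑f) k)) (2 : ℝ≥0∞) := by
  apply memℓp_gen
  have := (BCL_hasSum_lp S T hST hnorm f).summable
  have h2 : (2 : ℝ≥0∞).toReal = (2:ℕ) := by norm_num
  simpa [h2, Real.rpow_natCast] using this

/-- The generic operator `(W f) k = S (f k) + T (f (k-1))` on `ℓ²(ℕ, E)`. -/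
def BCLop (S T : E →L[ℂ] E)
    (hST : ∀ x y : E, ⟪S x, T y⟫_ℂ = 0)
    (hnorm : ∀ x : E, ‖S x‖ ^ 2 + ‖T x‖ ^ 2 = ‖x‖ ^ 2) :
    lp (fun _ : ℕ => E) 2 →L[ℂ] lp (fun _ : ℕ => E) 2 := by
  refine LinearIsometry.toContinuousLinearMap
    { toFun := fun f => ⟨fun k => S (f k) + T (BCLprev (⇑f) k), BCL_memℓp S T hST hnorm f⟩
      map_add' := ?_
      map_smul' := ?_
      norm_map' := ?_ }
  · intro f g
    apply lp.ext
    funext k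
    have : ⇑(f + g) = ⇑f + ⇑g := lp.coeFn_add f g
    simp [this, BCLprev_add, map_add]
    change _ = ((_ : E) + _) + ((_ : E) + _)
    abel
  · intro c f
    apply lp.ext
    funext k
    have : ⇑(c • f) = c • ⇑f := lp.coeFn_smul c f
    simp [this, BCLprev_smul, map_smul]
  · intro f
    have hW := BCL_hasSum_lp S T hST hnorm f
    have hp : (0:ℝ) < (2 : ℝ≥0∞).toReal := by norm_num
    have h1 := lp.hasSum_norm hp
      (⟨fun k => S (f k) + T (BCLprev (⇑f) k), BCL_memℓp S T hST hnorm f⟩ :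
        lp (fun _ : ℕ => E) 2)
    have h2 : (2 : ℝ≥0∞).toReal = ((2:ℕ):ℝ) := by norm_num
    rw [h2] at h1
    simp only [Real.rpow_natCast] at h1
    have h3 := hW.unique h1
    have h4 : ‖(⟨fun k => S (f k) + T (BCLprev (⇑f) k), BCL_memℓp S T hST hnorm f⟩ :
        lp (fun _ : ℕ => E) 2)‖ = ‖f‖ := by
      have := congrArg Real.sqrt h3
      rw [Real.sqrt_sq (norm_nonneg _), Real.sqrt_sq (norm_nonneg _)] at this
      exact this.symm
    exact h4

@[simp] lemma BCLop_apply (S T : E →L[ℂ] E)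
    (hST : ∀ x y : E, ⟪S x, T y⟫_ℂ = 0)
    (hnorm : ∀ x : E, ‖S x‖ ^ 2 + ‖T x‖ ^ 2 = ‖x‖ ^ 2)
    (f : lp (fun _ : ℕ => E) 2) (k : ℕ) :
    BCLop S T hST hnorm f k = S (f k) + T (BCLprev (⇑f) k) := rfl

lemma BCLop_norm (S T : E →L[ℂ] E)
    (hST : ∀ x y : E, ⟪S x, T y⟫_ℂ = 0)
    (hnorm : ∀ x : E, ‖S x‖ ^ 2 + ‖T x‖ ^ 2 = ‖x‖ ^ 2)
    (f : lp (fun _ : ℕ => E) 2) :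
    ‖BCLop S T hST hnorm f‖ = ‖f‖ := by
  have hW := BCL_hasSum_lp S T hST hnorm f
  have hp : (0:ℝ) < (2 : ℝ≥0∞).toReal := by norm_num
  have h1 := lp.hasSum_norm hp (BCLop S T hST hnorm f)
  have h2 : (2 : ℝ≥0∞).toReal = ((2:ℕ):ℝ) := by norm_num
  rw [h2] at h1
  simp only [Real.rpow_natCast, BCLop_apply] at h1
  have h3 := hW.unique h1
  have := congrArg Real.sqrt h3
  rw [Real.sqrt_sq (norm_nonneg _), Real.sqrt_sq (norm_nonneg _)] at this
  exact this.symm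

end BCLaux

open scoped InnerProductSpace ENNReal

set_option maxHeartbeats 1000000 in
/-- For a unitary `U` and projection `P` on `E`, with `Φ₁(z) = (P + zP^⊥)U*`,
`Φ₂(z) = U(P^⊥ + zP)`: if `Φ₁(z)Φ₂(z) = z I_E` then also `Φ₂(z)Φ₁(z) = z I_E`,
and the multiplication operators `M_{Φ₁}, M_{Φ₂}` on `H²_E(𝔻)` are commuting
isometries with `M_{Φ₁} M_{Φ₂} = M_z`. -/
theorem BCL_pair_commuting_isometries
    {E : Type*} [NormedAddCommGroup E] [InnerProductSpace ℂ E] [CompleteSpace E]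
    (U P : E →L[ℂ] E)
    (hU : adjoint U ∘L U = 1 ∧ U ∘L adjoint U = 1)
    (hP : IsSelfAdjoint P ∧ IsIdempotentElem P)
    (hΦ : ∀ z : ℂ, ((P + z • (1 - P)) ∘L adjoint U) ∘L (U ∘L ((1 - P) + z • P)) =
      z • (1 : E →L[ℂ] E)) :
    (∀ z : ℂ, (U ∘L ((1 - P) + z • P)) ∘L ((P + z • (1 - P)) ∘L adjoint U) =
      z • (1 : E →L[ℂ] E)) ∧
    ∃ M₁ M₂ Mz : lp (fun _ : ℕ => E) 2 →L[ℂ] lp (fun _ : ℕ => E) 2,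
      (∀ f, M₁ f 0 = (P ∘L adjoint U) (f 0)) ∧
      (∀ f (k : ℕ), M₁ f (k + 1) =
        (P ∘L adjoint U) (f (k + 1)) + ((1 - P) ∘L adjoint U) (f k)) ∧
      (∀ f, M₂ f 0 = (U ∘L (1 - P)) (f 0)) ∧
      (∀ f (k : ℕ), M₂ f (k + 1) =
        (U ∘L (1 - P)) (f (k + 1)) + (U ∘L P) (f k)) ∧
      (∀ f, Mz f 0 = 0) ∧ (∀ f (k : ℕ), Mz f (k + 1) = f k) ∧
      (∀ f, ‖M₁ f‖ = ‖f‖) ∧ (∀ f, ‖M₂ f‖ = ‖f‖) ∧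
      M₁ ∘L M₂ = M₂ ∘L M₁ ∧
      M₁ ∘L M₂ = Mz := by
  obtain ⟨hU1, hU2⟩ := hU
  obtain ⟨hPsa, hPid⟩ := hP
  -- pointwise facts
  have hUl : ∀ x : E, adjoint U (U x) = x := fun x => by
    have := ContinuousLinearMap.ext_iff.1 hU1 x
    simpa using this
  have hUr : ∀ x : E, U (adjoint U x) = x := fun x => by
    have := ContinuousLinearMap.ext_iff.1 hU2 x
    simpa using this
  have hPPx : ∀ x : E, P (P x) = P x := fun x => by
    have := ContinuousLinearMap.ext_iff.1 hPid x
    simpa [ContinuousLinearMap.mul_apply] using this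
  have hPinner : ∀ x y : E, ⟪P x, y⟫_ℂ = ⟪x, P y⟫_ℂ := fun x y => by
    conv_lhs => rw [← hPsa.adjoint_eq]
    exact ContinuousLinearMap.adjoint_inner_left P y x
  have hUadnorm : ∀ x : E, ‖adjoint U x‖ = ‖x‖ := fun x => by
    have h1 : ⟪adjoint U x, adjoint U x⟫_ℂ = ⟪x, x⟫_ℂ := by
      rw [ContinuousLinearMap.adjoint_inner_left, hUr]
    rw [@norm_eq_sqrt_re_inner ℂ, @norm_eq_sqrt_re_inner ℂ E _ _ _ x, h1]
  have hUnorm : ∀ x : E, ‖U x‖ = ‖x‖ := fun x => by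
    have h1 : ⟪U x, U x⟫_ℂ = ⟪x, x⟫_ℂ := by
      rw [← ContinuousLinearMap.adjoint_inner_left U, hUl]
    rw [@norm_eq_sqrt_re_inner ℂ, @norm_eq_sqrt_re_inner ℂ E _ _ _ x, h1]
  have hPyth : ∀ y : E, ‖P y‖ ^ 2 + ‖y - P y‖ ^ 2 = ‖y‖ ^ 2 := fun y => by
    have hinner : ⟪P y, y - P y⟫_ℂ = 0 := by
      rw [inner_sub_right, hPinner, hPinner, hPPx, sub_self]
    have := norm_add_sq_eq_norm_sq_add_norm_sq_of_inner_eq_zero (P y) (y - P y) hinner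
    have h2 : P y + (y - P y) = y := by abel
    rw [h2] at this
    nlinarith [this]
  -- part 1
  have part1 : ∀ z : ℂ, (U ∘L ((1 - P) + z • P)) ∘L ((P + z • (1 - P)) ∘L adjoint U) =
      z • (1 : E →L[ℂ] E) := by
    intro z
    ext x
    have hw : ((1 - P) + z • P) ((P + z • ((1 : E →L[ℂ] E) - P)) (adjoint U x)) =
        z • (adjoint U x) := by
      simp only [ContinuousLinearMap.add_apply, ContinuousLinearMap.smul_apply,
        ContinuousLinearMap.sub_apply, ContinuousLinearMap.one_apply, map_add, map_smul,
        map_sub, hPPx]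
      module
    simp only [ContinuousLinearMap.comp_apply, hw, map_smul, hUr,
      ContinuousLinearMap.smul_apply, ContinuousLinearMap.one_apply]
  refine ⟨part1, ?_⟩
  -- hypotheses for the three BCL operators
  have hST₁ : ∀ x y : E, ⟪(P ∘L adjoint U) x, ((1 - P) ∘L adjoint U) y⟫_ℂ = 0 := by
    intro x y
    simp only [ContinuousLinearMap.comp_apply, ContinuousLinearMap.sub_apply,
      ContinuousLinearMap.one_apply]
    rw [inner_sub_right, hPinner, hPinner, hPPx, sub_self]
  have hnorm₁ : ∀ x : E, ‖(P ∘L adjoint U) x‖ ^ 2 + ‖((1 - P) ∘L adjoint U) x‖ ^ 2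
      = ‖x‖ ^ 2 := by
    intro x
    simp only [ContinuousLinearMap.comp_apply, ContinuousLinearMap.sub_apply,
      ContinuousLinearMap.one_apply]
    rw [hPyth (adjoint U x), hUadnorm]
  have hST₂ : ∀ x y : E, ⟪(U ∘L (1 - P)) x, (U ∘L P) y⟫_ℂ = 0 := by
    intro x y
    simp only [ContinuousLinearMap.comp_apply, ContinuousLinearMap.sub_apply,
      ContinuousLinearMap.one_apply]
    rw [← ContinuousLinearMap.adjoint_inner_left U, hUl, inner_sub_left, hPinner, hPPx,
      ← hPinner, sub_self]
  have hnorm₂ : ∀ x : E, ‖(U ∘L (1 - P)) x‖ ^ 2 + ‖(U ∘L P) x‖ ^ 2 = ‖x‖ ^ 2 := by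
    intro x
    simp only [ContinuousLinearMap.comp_apply, ContinuousLinearMap.sub_apply,
      ContinuousLinearMap.one_apply]
    rw [hUnorm, hUnorm, add_comm]
    exact hPyth x
  have hST₀ : ∀ x y : E, ⟪(0 : E →L[ℂ] E) x, (1 : E →L[ℂ] E) y⟫_ℂ = 0 := by
    intro x y; simp
  have hnorm₀ : ∀ x : E, ‖(0 : E →L[ℂ] E) x‖ ^ 2 + ‖(1 : E →L[ℂ] E) x‖ ^ 2 = ‖x‖ ^ 2 := by
    intro x; simp
  set M₁ := BCLop (P ∘L adjoint U) ((1 - P) ∘L adjoint U) hST₁ hnorm₁ with hM₁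
  set M₂ := BCLop (U ∘L (1 - P)) (U ∘L P) hST₂ hnorm₂ with hM₂
  set Mz := BCLop (0 : E →L[ℂ] E) (1 : E →L[ℂ] E) hST₀ hnorm₀ with hMz
  -- pointwise composition identities
  have h11 : ∀ x : E, (P ∘L adjoint U) ((U ∘L (1 - P)) x) = 0 := by
    intro x
    simp [ContinuousLinearMap.comp_apply, ContinuousLinearMap.sub_apply, map_sub, hUl, hPPx]
  have h12a : ∀ x : E, (P ∘L adjoint U) ((U ∘L P) x) = P x := by
    intro x
    simp [ContinuousLinearMap.comp_apply, hUl, hPPx]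
  have h12b : ∀ x : E, ((1 - P) ∘L adjoint U) ((U ∘L (1 - P)) x) = x - P x := by
    intro x
    simp [ContinuousLinearMap.comp_apply, ContinuousLinearMap.sub_apply, map_sub, hUl, hPPx]
  have h13 : ∀ x : E, ((1 - P) ∘L adjoint U) ((U ∘L P) x) = 0 := by
    intro x
    simp [ContinuousLinearMap.comp_apply, ContinuousLinearMap.sub_apply, hUl, hPPx]
  have h21 : ∀ x : E, (U ∘L (1 - P)) ((P ∘L adjoint U) x) = 0 := by
    intro x
    simp [ContinuousLinearMap.comp_apply, ContinuousLinearMap.sub_apply, map_sub, hPPx]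
  have h22a : ∀ x : E, (U ∘L (1 - P)) (((1 - P) ∘L adjoint U) x)
      = U (adjoint U x) - U (P (adjoint U x)) := by
    intro x
    simp only [ContinuousLinearMap.comp_apply, ContinuousLinearMap.sub_apply,
      ContinuousLinearMap.one_apply, map_sub, hPPx]
    simp
  have h22b : ∀ x : E, (U ∘L P) ((P ∘L adjoint U) x) = U (P (adjoint U x)) := by
    intro x
    simp [ContinuousLinearMap.comp_apply, hPPx]
  have h23 : ∀ x : E, (U ∘L P) (((1 - P) ∘L adjoint U) x) = 0 := by
    intro x
    simp [ContinuousLinearMap.comp_apply, ContinuousLinearMap.sub_apply, map_sub, hPPx]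
  have hcomp1 : M₁ ∘L M₂ = Mz := by
    ext f k
    cases k with
    | zero =>
      simp [hM₁, hM₂, hMz, ContinuousLinearMap.comp_apply, ContinuousLinearMap.sub_apply,
        ContinuousLinearMap.one_apply, map_sub, hUl, hUr, hPPx]
    | succ k =>
      simp [hM₁, hM₂, hMz, ContinuousLinearMap.comp_apply, ContinuousLinearMap.sub_apply,
        ContinuousLinearMap.one_apply, map_sub, hUl, hUr, hPPx]
  have hcomp2 : M₂ ∘L M₁ = Mz := by
    ext f k
    cases k with
    | zero =>
      simp [hM₁, hM₂, hMz, ContinuousLinearMap.comp_apply, ContinuousLinearMap.sub_apply,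
        ContinuousLinearMap.one_apply, map_sub, hUl, hUr, hPPx]
    | succ k =>
      simp [hM₁, hM₂, hMz, ContinuousLinearMap.comp_apply, ContinuousLinearMap.sub_apply,
        ContinuousLinearMap.one_apply, map_sub, hUl, hUr, hPPx]
  refine ⟨M₁, M₂, Mz, ?_, ?_, ?_, ?_, ?_, ?_, ?_, ?_, ?_, ?_⟩
  · intro f; simp [hM₁, BCLop_apply]
  · intro f k; simp [hM₁, BCLop_apply]
  · intro f; simp [hM₂, BCLop_apply]
  · intro f k; simp [hM₂, BCLop_apply]
  · intro f; simp [hMz, BCLop_apply]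
  · intro f k; simp [hMz, BCLop_apply]
  · intro f; exact BCLop_norm _ _ _ _ f
  · intro f; exact BCLop_norm _ _ _ _ f
  · rw [hcomp1, hcomp2]
  · exact hcomp1
end

section
/- Let T on H and S on K be commuting contraction tuples admitting canonical isometric pseudo-extensions (J_T, Q_T, V) and (J_S, Q_S, W) (so J_T* J_T = SOT-lim P_T^{*k}P_T^k, Vᵢ J_T = J_T Tᵢ, similarly for S, with the Vᵢ, Wᵢ isometries and Q_T = closure(Ran J_T), Q_S = closure(Ran J_S)). Then the solution spaces satisfy 𝒯(S,T) = J_S* 𝒯(W,V) J_T, where 𝒯(S,T) = {X ∈ B(H,K) : Sᵢ* X Tᵢ = X ∀i}. Moreover every contraction A ∈ 𝒯(S,T) equals J_S* B J_T for some contraction B ∈ 𝒯(W,V) with ‖A‖ = ‖B‖. -/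
open ContinuousLinearMap Filter Topology

local notation "⟪" x ", " y "⟫" => @inner ℂ _ _ x y

/-- Riesz-type solvability: if a continuous linear functional `u` on `E` is dominated by
`c * ‖J x‖` for a map `J : E → G` into a Hilbert space, then there is `v : G` of norm `≤ c`
with `⟪v, J x⟫ = u x` for all `x`. -/
lemma riesz_solve {E G : Type*} [NormedAddCommGroup E] [InnerProductSpace ℂ E]
    [NormedAddCommGroup G] [InnerProductSpace ℂ G] [CompleteSpace G]
    (J : E →L[ℂ] G) (u : E →L[ℂ] ℂ) (c : ℝ) (hc : 0 ≤ c)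
    (hb : ∀ x, ‖u x‖ ≤ c * ‖J x‖) :
    ∃ v : G, ‖v‖ ≤ c ∧ ∀ x : E, ⟪v, J x⟫ = u x := by
  classical
  have hwd : ∀ x y : E, J x = J y → u x = u y := by
    intro x y hxy
    have h0 : ‖u (x - y)‖ ≤ c * ‖J (x - y)‖ := hb (x - y)
    rw [map_sub, map_sub, hxy, sub_self, norm_zero, mul_zero] at h0
    have h1 : ‖u x - u y‖ = 0 := le_antisymm h0 (norm_nonneg _)
    exact sub_eq_zero.mp (norm_eq_zero.mp h1)
  set p : Submodule ℂ G := LinearMap.range (J.toLinearMap) with hp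
  have hpick : ∀ q : p, ∃ x : E, J x = (q : G) := fun q => LinearMap.mem_range.mp q.2
  set pk : p → E := fun q => (hpick q).choose with hpkdef
  have hpk : ∀ q : p, J (pk q) = (q : G) := fun q => (hpick q).choose_spec
  let φ₀ : p →ₗ[ℂ] ℂ :=
    { toFun := fun q => u (pk q)
      map_add' := by
        intro q r
        show u (pk (q + r)) = u (pk q) + u (pk r)
        have hJ : J (pk (q + r)) = J (pk q + pk r) := by
          rw [map_add, hpk, hpk, hpk, Submodule.coe_add]
        rw [hwd _ _ hJ, map_add]
      map_smul' := by
        intro a q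
        show u (pk (a • q)) = (RingHom.id ℂ) a • u (pk q)
        have hJ : J (pk (a • q)) = J (a • pk q) := by
          rw [map_smul, hpk, hpk, Submodule.coe_smul]
        rw [hwd _ _ hJ, map_smul]
        rfl }
  have hφ₀ : ∀ q : p, ‖φ₀ q‖ ≤ c * ‖q‖ := by
    intro q
    calc ‖u (pk q)‖ ≤ c * ‖J (pk q)‖ := hb _
      _ = c * ‖q‖ := by rw [hpk]; rfl
  let φ : p →L[ℂ] ℂ := φ₀.mkContinuous c hφ₀
  obtain ⟨g, hg, hgn⟩ := exists_extension_norm_eq p φ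
  refine ⟨(InnerProductSpace.toDual ℂ G).symm g, ?_, ?_⟩
  · rw [LinearIsometryEquiv.norm_map, hgn]
    exact LinearMap.mkContinuous_norm_le φ₀ hc hφ₀
  · intro x
    rw [InnerProductSpace.toDual_symm_apply]
    have hx : J x ∈ p := ⟨x, rfl⟩
    calc g (J x) = φ ⟨J x, hx⟩ := hg ⟨J x, hx⟩
      _ = u (pk ⟨J x, hx⟩) := rfl
      _ = u x := hwd _ _ (by rw [hpk])

/-- Two vectors agreeing in inner product against a dense range are equal. -/
lemma dense_inner_ext {E G : Type*} [NormedAddCommGroup E] [InnerProductSpace ℂ E]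
    [NormedAddCommGroup G] [InnerProductSpace ℂ G]
    (J : E →L[ℂ] G) (hd : DenseRange J) {v w : G}
    (h : ∀ x : E, ⟪v, J x⟫ = ⟪w, J x⟫) : v = w := by
  apply ext_inner_right ℂ
  intro q
  have heq : (fun y : G => (⟪v, y⟫ : ℂ)) = fun y : G => (⟪w, y⟫ : ℂ) := by
    apply hd.equalizer
    · exact continuous_const.inner continuous_id
    · exact continuous_const.inner continuous_id
    · funext x; exact h x
  exact congrFun heq q

set_option maxHeartbeats 1000000 in
/-- If `(J_T, Q_T, V)` and `(J_S, Q_S, W)` are canonical isometric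
pseudo-extensions of `T` and `S`, then `𝒯(S,T) = J_S* 𝒯(W,V) J_T`; moreover
every `A ∈ 𝒯(S,T)` equals `J_S* B J_T` for some `B ∈ 𝒯(W,V)` with
`‖A‖ = ‖B‖`. -/
theorem toeplitz_via_canonical_pseudo_extensions
    {H : Type*} [NormedAddCommGroup H] [InnerProductSpace ℂ H] [CompleteSpace H]
    {K : Type*} [NormedAddCommGroup K] [InnerProductSpace ℂ K] [CompleteSpace K]
    {QT : Type*} [NormedAddCommGroup QT] [InnerProductSpace ℂ QT] [CompleteSpace QT]
    {QS : Type*} [NormedAddCommGroup QS] [InnerProductSpace ℂ QS] [CompleteSpace QS]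
    (n : ℕ) (T : Fin n → H →L[ℂ] H) (S : Fin n → K →L[ℂ] K)
    (hcommT : ∀ i j, Commute (T i) (T j)) (hcontrT : ∀ i, ‖T i‖ ≤ 1)
    (hcommS : ∀ i j, Commute (S i) (S j)) (hcontrS : ∀ i, ‖S i‖ ≤ 1)
    (PT : H →L[ℂ] H) (hPT : PT = (List.ofFn T).prod)
    (PS : K →L[ℂ] K) (hPS : PS = (List.ofFn S).prod)
    (JT : H →L[ℂ] QT) (hJTnorm : ‖JT‖ ≤ 1) (hJTdense : DenseRange JT)
    (V : Fin n → QT →L[ℂ] QT)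
    (hViso : ∀ i, ∀ x : QT, ‖V i x‖ = ‖x‖)
    (hVint : ∀ i, JT ∘L T i = V i ∘L JT)
    (hJTcan : ∀ h : H, Tendsto
      (fun k : ℕ => (((adjoint PT) ^ k) ∘L (PT ^ k)) h) atTop
      (𝓝 ((adjoint JT ∘L JT) h)))
    (JS : K →L[ℂ] QS) (hJSnorm : ‖JS‖ ≤ 1) (hJSdense : DenseRange JS)
    (W : Fin n → QS →L[ℂ] QS)
    (hWiso : ∀ i, ∀ x : QS, ‖W i x‖ = ‖x‖)
    (hWint : ∀ i, JS ∘L S i = W i ∘L JS)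
    (hJScan : ∀ k : K, Tendsto
      (fun m : ℕ => (((adjoint PS) ^ m) ∘L (PS ^ m)) k) atTop
      (𝓝 ((adjoint JS ∘L JS) k))) :
    (∀ X : H →L[ℂ] K,
      (∀ i, adjoint (S i) ∘L X ∘L T i = X) ↔
      ∃ B : QT →L[ℂ] QS,
        (∀ i, adjoint (W i) ∘L B ∘L V i = B) ∧
        X = adjoint JS ∘L B ∘L JT) ∧
    ∀ A : H →L[ℂ] K, (∀ i, adjoint (S i) ∘L A ∘L T i = A) →
      ∃ B : QT →L[ℂ] QS,
        (∀ i, adjoint (W i) ∘L B ∘L V i = B) ∧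
        A = adjoint JS ∘L B ∘L JT ∧ ‖A‖ = ‖B‖ := by
  classical
  -- pointwise forms of the intertwining relations
  have hVpt : ∀ i (h : H), JT (T i h) = V i (JT h) := by
    intro i h
    exact congrArg (fun f : H →L[ℂ] QT => f h) (hVint i)
  have hWpt : ∀ i (k : K), JS (S i k) = W i (JS k) := by
    intro i k
    exact congrArg (fun f : K →L[ℂ] QS => f k) (hWint i)
  -- backward direction
  have back : ∀ (B : QT →L[ℂ] QS), (∀ i, adjoint (W i) ∘L B ∘L V i = B) →
      ∀ i, adjoint (S i) ∘L (adjoint JS ∘L B ∘L JT) ∘L T i = adjoint JS ∘L B ∘L JT := by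
    intro B hB i
    ext h
    have e2 : ∀ z : QS, adjoint (S i) (adjoint JS z) = adjoint JS (adjoint (W i) z) := by
      intro z
      have h3 : adjoint (JS ∘L S i) = adjoint (W i ∘L JS) := by rw [hWint i]
      rw [adjoint_comp, adjoint_comp] at h3
      exact congrArg (fun f : QS →L[ℂ] K => f z) h3
    have e3 : (adjoint (W i) ∘L B ∘L V i) (JT h) = B (JT h) := by rw [hB i]
    simp only [comp_apply] at e3 ⊢
    rw [hVpt i h, e2, e3]
  -- main construction
  have main : ∀ A : H →L[ℂ] K, (∀ i, adjoint (S i) ∘L A ∘L T i = A) →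
      ∃ B : QT →L[ℂ] QS,
        (∀ i, adjoint (W i) ∘L B ∘L V i = B) ∧
        A = adjoint JS ∘L B ∘L JT ∧ ‖A‖ = ‖B‖ := by
    intro A hA
    have hApt : ∀ i (h : H), adjoint (S i) (A (T i h)) = A h := by
      intro i h
      exact congrArg (fun f : H →L[ℂ] K => f h) (hA i)
    -- one-step: A h = adjoint PS (A (PT h))
    have hlist : ∀ l : List (Fin n), ∀ h : H,
        A h = adjoint ((l.map S).prod) (A (((l.map T).prod) h)) := by
      intro l
      induction l with
      | nil => intro h; simp [← star_eq_adjoint]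
      | cons i l ih =>
        intro h
        simp only [List.map_cons, List.prod_cons]
        have hadj : adjoint (S i * (l.map S).prod)
            = adjoint ((l.map S).prod) * adjoint (S i) := by
          rw [← star_eq_adjoint, star_mul, star_eq_adjoint, star_eq_adjoint]
        rw [hadj, mul_apply_eq_comp, mul_apply_eq_comp, hApt i, ← ih h]
    have hstep : ∀ h : H, A h = adjoint PS (A (PT h)) := by
      intro h
      have := hlist (List.finRange n) h
      rwa [← List.ofFn_eq_map, ← List.ofFn_eq_map, ← hPT, ← hPS] at this
    have hpow : ∀ (m : ℕ) (h : H), A h = adjoint (PS ^ m) (A ((PT ^ m) h)) := by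
      intro m
      induction m with
      | zero => intro h; simp [← star_eq_adjoint]
      | succ m ih =>
        intro h
        have hadj : adjoint (PS ^ (m + 1)) = adjoint PS * adjoint (PS ^ m) := by
          rw [← star_eq_adjoint, pow_succ, star_mul, star_eq_adjoint, star_eq_adjoint]
        have hPTp : (PT ^ (m + 1)) h = (PT ^ m) (PT h) := by
          rw [pow_succ, mul_apply_eq_comp]
        rw [hPTp, hadj, mul_apply_eq_comp, ← ih (PT h), ← hstep h]
    -- norm convergence
    have hadjpow : ∀ (R : QT →L[ℂ] QT), True := fun _ => trivial
    have hnT : ∀ h : H, Tendsto (fun m : ℕ => ‖(PT ^ m) h‖) atTop (𝓝 ‖JT h‖) := by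
      intro h
      have h1 : Tendsto (fun m : ℕ => (⟪(((adjoint PT) ^ m) ∘L (PT ^ m)) h, h⟫ : ℂ))
          atTop (𝓝 (⟪(adjoint JT ∘L JT) h, h⟫ : ℂ)) :=
        (hJTcan h).inner tendsto_const_nhds
      have h1' : Tendsto (fun m : ℕ =>
            RCLike.re (⟪(((adjoint PT) ^ m) ∘L (PT ^ m)) h, h⟫ : ℂ))
          atTop (𝓝 (RCLike.re (⟪(adjoint JT ∘L JT) h, h⟫ : ℂ))) :=
        (RCLike.continuous_re.tendsto _).comp h1
      have h2 : ∀ m : ℕ, RCLike.re (⟪(((adjoint PT) ^ m) ∘L (PT ^ m)) h, h⟫ : ℂ)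
          = ‖(PT ^ m) h‖ ^ 2 := by
        intro m
        have hp : (adjoint PT) ^ m = adjoint (PT ^ m) := by
          rw [← star_eq_adjoint, ← star_eq_adjoint, star_pow]
        rw [comp_apply, hp, adjoint_inner_left]
        exact inner_self_eq_norm_sq _
      have h3 : RCLike.re (⟪(adjoint JT ∘L JT) h, h⟫ : ℂ) = ‖JT h‖ ^ 2 := by
        rw [comp_apply, adjoint_inner_left]
        exact inner_self_eq_norm_sq _
      rw [funext h2, h3] at h1'
      have h5 : Tendsto (fun m : ℕ => Real.sqrt (‖(PT ^ m) h‖ ^ 2)) atTop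
          (𝓝 (Real.sqrt (‖JT h‖ ^ 2))) :=
        (Real.continuous_sqrt.tendsto _).comp h1'
      have e : (fun m : ℕ => Real.sqrt (‖(PT ^ m) h‖ ^ 2))
          = fun m : ℕ => ‖(PT ^ m) h‖ :=
        funext fun m => Real.sqrt_sq (norm_nonneg _)
      rw [e, Real.sqrt_sq (norm_nonneg _)] at h5
      exact h5
    have hnS : ∀ k : K, Tendsto (fun m : ℕ => ‖(PS ^ m) k‖) atTop (𝓝 ‖JS k‖) := by
      intro k
      have h1 : Tendsto (fun m : ℕ => (⟪(((adjoint PS) ^ m) ∘L (PS ^ m)) k, k⟫ : ℂ))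
          atTop (𝓝 (⟪(adjoint JS ∘L JS) k, k⟫ : ℂ)) :=
        (hJScan k).inner tendsto_const_nhds
      have h1' : Tendsto (fun m : ℕ =>
            RCLike.re (⟪(((adjoint PS) ^ m) ∘L (PS ^ m)) k, k⟫ : ℂ))
          atTop (𝓝 (RCLike.re (⟪(adjoint JS ∘L JS) k, k⟫ : ℂ))) :=
        (RCLike.continuous_re.tendsto _).comp h1
      have h2 : ∀ m : ℕ, RCLike.re (⟪(((adjoint PS) ^ m) ∘L (PS ^ m)) k, k⟫ : ℂ)
          = ‖(PS ^ m) k‖ ^ 2 := by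
        intro m
        have hp : (adjoint PS) ^ m = adjoint (PS ^ m) := by
          rw [← star_eq_adjoint, ← star_eq_adjoint, star_pow]
        rw [comp_apply, hp, adjoint_inner_left]
        exact inner_self_eq_norm_sq _
      have h3 : RCLike.re (⟪(adjoint JS ∘L JS) k, k⟫ : ℂ) = ‖JS k‖ ^ 2 := by
        rw [comp_apply, adjoint_inner_left]
        exact inner_self_eq_norm_sq _
      rw [funext h2, h3] at h1'
      have h5 : Tendsto (fun m : ℕ => Real.sqrt (‖(PS ^ m) k‖ ^ 2)) atTop
          (𝓝 (Real.sqrt (‖JS k‖ ^ 2))) :=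
        (Real.continuous_sqrt.tendsto _).comp h1'
      have e : (fun m : ℕ => Real.sqrt (‖(PS ^ m) k‖ ^ 2))
          = fun m : ℕ => ‖(PS ^ m) k‖ :=
        funext fun m => Real.sqrt_sq (norm_nonneg _)
      rw [e, Real.sqrt_sq (norm_nonneg _)] at h5
      exact h5
    -- the fundamental bound
    have hbound : ∀ (h : H) (k : K), ‖(⟪A h, k⟫ : ℂ)‖ ≤ ‖A‖ * (‖JT h‖ * ‖JS k‖) := by
      intro h k
      have hm : ∀ m : ℕ, ‖(⟪A h, k⟫ : ℂ)‖ ≤ ‖A‖ * (‖(PT ^ m) h‖ * ‖(PS ^ m) k‖) := by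
        intro m
        have e1 : (⟪A h, k⟫ : ℂ) = ⟪A ((PT ^ m) h), (PS ^ m) k⟫ := by
          rw [hpow m h, adjoint_inner_left]
        rw [e1]
        calc ‖(⟪A ((PT ^ m) h), (PS ^ m) k⟫ : ℂ)‖
            ≤ ‖A ((PT ^ m) h)‖ * ‖(PS ^ m) k‖ := norm_inner_le_norm _ _
          _ ≤ (‖A‖ * ‖(PT ^ m) h‖) * ‖(PS ^ m) k‖ := by
              exact mul_le_mul_of_nonneg_right (A.le_opNorm _) (norm_nonneg _)
          _ = ‖A‖ * (‖(PT ^ m) h‖ * ‖(PS ^ m) k‖) := by ring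
      have hlim : Tendsto (fun m : ℕ => ‖A‖ * (‖(PT ^ m) h‖ * ‖(PS ^ m) k‖)) atTop
          (𝓝 (‖A‖ * (‖JT h‖ * ‖JS k‖))) :=
        tendsto_const_nhds.mul ((hnT h).mul (hnS k))
      exact ge_of_tendsto hlim (Eventually.of_forall hm)
    -- construct C : H →L QS with ⟪C h, JS k⟫ = ⟪A h, k⟫ and ‖C h‖ ≤ ‖A‖‖JT h‖
    have hex : ∀ h : H, ∃ v : QS, ‖v‖ ≤ ‖A‖ * ‖JT h‖ ∧ ∀ k, ⟪v, JS k⟫ = ⟪A h, k⟫ := by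
      intro h
      refine riesz_solve JS (innerSL ℂ (A h)) (‖A‖ * ‖JT h‖) (by positivity) ?_
      intro k
      have := hbound h k
      simpa [innerSL_apply_apply, mul_assoc] using this
    choose v hv1 hv2 using hex
    have hvadd : ∀ h h' : H, v (h + h') = v h + v h' := by
      intro h h'
      apply dense_inner_ext JS hJSdense
      intro k
      rw [inner_add_left, hv2, hv2, hv2, map_add, inner_add_left]
    have hvsmul : ∀ (a : ℂ) (h : H), v (a • h) = a • v h := by
      intro a h
      apply dense_inner_ext JS hJSdense
      intro k
      rw [inner_smul_left, hv2, hv2, map_smul, inner_smul_left]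
    let C : H →L[ℂ] QS :=
      LinearMap.mkContinuous
        { toFun := v, map_add' := hvadd, map_smul' := hvsmul } ‖A‖
        (fun h => (hv1 h).trans (by
          have h1 : ‖JT h‖ ≤ ‖h‖ := by
            calc ‖JT h‖ ≤ ‖JT‖ * ‖h‖ := JT.le_opNorm h
              _ ≤ 1 * ‖h‖ := mul_le_mul_of_nonneg_right hJTnorm (norm_nonneg _)
              _ = ‖h‖ := one_mul _
          exact mul_le_mul_of_nonneg_left h1 (norm_nonneg A)))
    have hC : ∀ (h : H) (k : K), ⟪C h, JS k⟫ = ⟪A h, k⟫ := fun h k => hv2 h k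
    have hCn : ∀ h : H, ‖C h‖ ≤ ‖A‖ * ‖JT h‖ := fun h => hv1 h
    -- construct B' : QS →L QT (the adjoint of the desired B)
    have hex2 : ∀ q : QS, ∃ w : QT, ‖w‖ ≤ ‖A‖ * ‖q‖ ∧ ∀ h, ⟪w, JT h⟫ = ⟪q, C h⟫ := by
      intro q
      refine riesz_solve JT ((innerSL ℂ q).comp C) (‖A‖ * ‖q‖) (by positivity) ?_
      intro h
      calc ‖((innerSL ℂ q).comp C) h‖ = ‖(⟪q, C h⟫ : ℂ)‖ := rfl
        _ ≤ ‖q‖ * ‖C h‖ := norm_inner_le_norm _ _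
        _ ≤ ‖q‖ * (‖A‖ * ‖JT h‖) := mul_le_mul_of_nonneg_left (hCn h) (norm_nonneg _)
        _ = (‖A‖ * ‖q‖) * ‖JT h‖ := by ring
    choose w hw1 hw2 using hex2
    have hwadd : ∀ q q' : QS, w (q + q') = w q + w q' := by
      intro q q'
      apply dense_inner_ext JT hJTdense
      intro h
      rw [inner_add_left, hw2, hw2, hw2, inner_add_left]
    have hwsmul : ∀ (a : ℂ) (q : QS), w (a • q) = a • w q := by
      intro a q
      apply dense_inner_ext JT hJTdense
      intro h
      rw [inner_smul_left, hw2, hw2, inner_smul_left]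
    let B' : QS →L[ℂ] QT :=
      LinearMap.mkContinuous
        { toFun := w, map_add' := hwadd, map_smul' := hwsmul } ‖A‖ hw1
    have hB'w : ∀ (q : QS) (h : H), ⟪B' q, JT h⟫ = ⟪q, C h⟫ := fun q h => hw2 q h
    let B : QT →L[ℂ] QS := adjoint B'
    have hBJ : ∀ h : H, B (JT h) = C h := by
      intro h
      apply ext_inner_right ℂ
      intro q
      calc (⟪B (JT h), q⟫ : ℂ) = ⟪JT h, B' q⟫ := adjoint_inner_left B' q (JT h)
        _ = starRingEnd ℂ ⟪B' q, JT h⟫ := (inner_conj_symm _ _).symm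
        _ = starRingEnd ℂ ⟪q, C h⟫ := by rw [hB'w q h]
        _ = ⟪C h, q⟫ := inner_conj_symm _ _
    have heq : A = adjoint JS ∘L B ∘L JT := by
      ext h
      apply ext_inner_right ℂ
      intro y
      simp only [comp_apply]
      rw [adjoint_inner_left, hBJ, hC]
    have hint : ∀ i, adjoint (W i) ∘L B ∘L V i = B := by
      intro i
      have hfun : ⇑(adjoint (W i) ∘L B ∘L V i) = ⇑B := by
        apply hJTdense.equalizer
        · exact (adjoint (W i) ∘L B ∘L V i).continuous
        · exact B.continuous
        · funext h
          show (adjoint (W i) ∘L B ∘L V i) (JT h) = B (JT h)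
          simp only [comp_apply]
          rw [← hVpt i h, hBJ, hBJ]
          apply dense_inner_ext JS hJSdense
          intro k
          rw [adjoint_inner_left, ← hWpt i k, hC, hC, ← hApt i h, adjoint_inner_left]
      exact ContinuousLinearMap.ext fun x => congrFun hfun x
    refine ⟨B, hint, heq, le_antisymm ?_ ?_⟩
    · rw [heq]
      have hJSa : ‖(adjoint JS : QS →L[ℂ] K)‖ ≤ 1 := by
        rw [LinearIsometryEquiv.norm_map]
        exact hJSnorm
      calc ‖adjoint JS ∘L B ∘L JT‖ ≤ ‖(adjoint JS : QS →L[ℂ] K)‖ * ‖B ∘L JT‖ :=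
            opNorm_comp_le _ _
        _ ≤ ‖(adjoint JS : QS →L[ℂ] K)‖ * (‖B‖ * ‖JT‖) :=
            mul_le_mul_of_nonneg_left (opNorm_comp_le _ _) (norm_nonneg _)
        _ ≤ 1 * (‖B‖ * 1) := by
            have h0 : (0:ℝ) ≤ ‖B‖ := norm_nonneg _
            have h1 : ‖B‖ * ‖JT‖ ≤ ‖B‖ * 1 := mul_le_mul_of_nonneg_left hJTnorm h0
            have h2 : ‖(adjoint JS : QS →L[ℂ] K)‖ * (‖B‖ * ‖JT‖)
                ≤ 1 * (‖B‖ * ‖JT‖) :=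
              mul_le_mul_of_nonneg_right hJSa (by positivity)
            nlinarith [norm_nonneg (adjoint JS : QS →L[ℂ] K), norm_nonneg JT]
        _ = ‖B‖ := by ring
    · show ‖B‖ ≤ ‖A‖
      have : ‖B‖ = ‖B'‖ := LinearIsometryEquiv.norm_map _ B'
      rw [this]
      exact LinearMap.mkContinuous_norm_le _ (norm_nonneg A) hw1
  constructor
  · intro X
    constructor
    · intro hX
      obtain ⟨B, hB1, hB2, _⟩ := main X hX
      exact ⟨B, hB1, hB2⟩
    · rintro ⟨B, hB1, rfl⟩
      exact back B hB1
  · exact main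
end

section
/- Let A ∈ B(H,K) satisfy P_S^{*k} A P_T^k = A for all k ≥ 0, where P_T, P_S are contractions, and suppose ‖A‖ ≤ 1. Then AA* ≤ SOT-lim_k P_S^{*k} P_S^k, and hence by Douglas' factorization there is a contraction C : H → closure(Ran Q_S) with A = Q_S C, where Q_S² = SOT-lim P_S^{*k} P_S^k. -/
open ContinuousLinearMap Filter Topology

set_option maxHeartbeats 1000000

section Aux
variable {H : Type*} [NormedAddCommGroup H] [InnerProductSpace ℂ H] [CompleteSpace H]
  {K : Type*} [NormedAddCommGroup K] [InnerProductSpace ℂ K] [CompleteSpace K]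

-- Douglas construction from the norm bound
lemma aux_douglas (QS : K →L[ℂ] K) (hQSsa : adjoint QS = QS)
    (B : K →L[ℂ] H) (hbd : ∀ y : K, ‖B y‖ ≤ ‖QS y‖) :
    ∃ C : H →L[ℂ] K, ‖C‖ ≤ 1 ∧ adjoint B = QS ∘L C ∧
      ∀ h : H, C h ∈ closure (Set.range QS) := by
  set Qlin : K →ₗ[ℂ] K := (QS : K →ₗ[ℂ] K) with hQlin
  have hker : LinearMap.ker Qlin ≤ LinearMap.ker (B : K →ₗ[ℂ] H) := by
    intro y hy
    rw [LinearMap.mem_ker] at hy ⊢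
    have h0 : QS y = 0 := hy
    have := hbd y
    rw [h0, norm_zero] at this
    exact norm_le_zero_iff.mp this
  set M : Submodule ℂ K := LinearMap.range Qlin with hM
  set D0lin : M →ₗ[ℂ] H :=
    (Submodule.liftQ (LinearMap.ker Qlin) (B : K →ₗ[ℂ] H) hker).comp
      (Qlin.quotKerEquivRange.symm : M →ₗ[ℂ] (K ⧸ LinearMap.ker Qlin)) with hD0lin
  have hD0 : ∀ (y : K) (h : Qlin y ∈ M), D0lin ⟨Qlin y, h⟩ = B y := by
    intro y h
    show ((LinearMap.ker Qlin).liftQ (B : K →ₗ[ℂ] H) hker)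
      (Qlin.quotKerEquivRange.symm ⟨Qlin y, h⟩) = B y
    rw [LinearMap.quotKerEquivRange_symm_apply_image Qlin y h]
    simp
  have hD0b : ∀ x : M, ‖D0lin x‖ ≤ 1 * ‖x‖ := by
    rintro ⟨x, y, rfl⟩
    rw [one_mul, hD0 y ⟨y, rfl⟩]
    exact hbd y
  set D0 : M →L[ℂ] H := D0lin.mkContinuous 1 hD0b with hD0def
  set N : Submodule ℂ K := M.topologicalClosure with hN
  haveI : CompleteSpace N := M.isClosed_topologicalClosure.completeSpace_coe
  have heb : ∀ x : M, ‖x‖ ≤ ((1 : NNReal) : ℝ) * ‖(Submodule.inclusion M.le_topologicalClosure).mkContinuous 1 (fun x => by rw [one_mul]; rfl) x‖ := by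
    intro x; rw [NNReal.coe_one, one_mul]; rfl
  set e : M →L[ℂ] N := (Submodule.inclusion M.le_topologicalClosure).mkContinuous 1
      (fun x => by rw [one_mul]; rfl) with he
  have hdense : DenseRange e := by
    intro n
    have hn : (n : K) ∈ closure (M : Set K) := by
      rw [← Submodule.topologicalClosure_coe]; exact n.2
    rcases mem_closure_iff_seq_limit.mp hn with ⟨u, hu, hlim⟩
    have htd : Tendsto (fun j => e ⟨u j, hu j⟩) atTop (𝓝 n) :=
      tendsto_subtype_rng.mpr hlim
    exact mem_closure_of_tendsto htd
      (Eventually.of_forall fun j => Set.mem_range_self _)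
  set D1 : N →L[ℂ] H :=
    D0.extend e with hD1def
  have hD1norm : ‖D1‖ ≤ 1 := by
    have h := ContinuousLinearMap.opNorm_extend_le D0 hdense heb
    rw [NNReal.coe_one, one_mul] at h
    exact h.trans (LinearMap.mkContinuous_norm_le D0lin zero_le_one hD0b)
  have hD1e : ∀ x : M, D1 (e x) = D0 x := fun x =>
    ContinuousLinearMap.extend_eq D0 hdense (isUniformEmbedding_of_bound e heb).isUniformInducing x
  set D : K →L[ℂ] H := D1 ∘L (N.orthogonalProjectionOnto : K →L[ℂ] N) with hDdef
  have hDnorm : ‖D‖ ≤ 1 := by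
    refine (opNorm_comp_le _ _).trans ?_
    have h1 := Submodule.orthogonalProjectionOnto_norm_le N
    nlinarith [ContinuousLinearMap.opNorm_nonneg N.orthogonalProjectionOnto,
      ContinuousLinearMap.opNorm_nonneg D1, hD1norm]
  have hDQS : ∀ y : K, D (QS y) = B y := by
    intro y
    have hmM : QS y ∈ M := ⟨y, rfl⟩
    have hmN : QS y ∈ N := M.le_topologicalClosure hmM
    have hproj : N.orthogonalProjectionOnto (QS y) = ⟨QS y, hmN⟩ :=
      Submodule.orthogonalProjectionOnto_mem_subspace_eq_self (⟨QS y, hmN⟩ : N)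
    rw [hDdef, ContinuousLinearMap.comp_apply, hproj]
    have hee : (⟨QS y, hmN⟩ : N) = e ⟨QS y, hmM⟩ := rfl
    rw [hee, hD1e]
    exact hD0 y hmM
  have hDcomp : D ∘L QS = B := ContinuousLinearMap.ext fun y => hDQS y
  refine ⟨adjoint D, ?_, ?_, ?_⟩
  · exact (LinearIsometryEquiv.norm_map adjoint D).le.trans hDnorm
  · rw [← hDcomp, adjoint_comp, hQSsa]
  · intro h
    have hmem : adjoint D h ∈ N := by
      rw [← Submodule.orthogonal_orthogonal N]
      rw [Submodule.mem_orthogonal]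
      intro u hu
      rw [adjoint_inner_right]
      have hpz : N.orthogonalProjectionOnto u = 0 :=
        Submodule.orthogonalProjectionOnto_apply_of_mem_orthogonal hu
      rw [hDdef, ContinuousLinearMap.comp_apply, hpz, map_zero, inner_zero_left]
    have hset : closure (Set.range QS) = (N : Set K) := by
      rw [hN, Submodule.topologicalClosure_coe]
      congr 1
    exact hset ▸ hmem
end Aux


-- contraction powers
lemma aux_pow_norm_le {E : Type*} [NormedAddCommGroup E] [InnerProductSpace ℂ E]
    (T : E →L[ℂ] E) (hT : ‖T‖ ≤ 1) (k : ℕ) : ‖T ^ k‖ ≤ 1 := by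
  induction k with
  | zero => rw [pow_zero]; exact ContinuousLinearMap.norm_id_le
  | succ n ih =>
      rw [pow_succ]
      calc ‖T ^ n * T‖ ≤ ‖T ^ n‖ * ‖T‖ := norm_mul_le _ _
        _ ≤ 1 * 1 := mul_le_mul ih hT (norm_nonneg _) zero_le_one
        _ = 1 := one_mul 1

lemma aux_key_bound
    {H : Type*} [NormedAddCommGroup H] [InnerProductSpace ℂ H] [CompleteSpace H]
    {K : Type*} [NormedAddCommGroup K] [InnerProductSpace ℂ K] [CompleteSpace K]
    (PT : H →L[ℂ] H) (hPT : ‖PT‖ ≤ 1)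
    (PS : K →L[ℂ] K) (hPS : ‖PS‖ ≤ 1)
    (A : H →L[ℂ] K) (hAnorm : ‖A‖ ≤ 1)
    (hA : ∀ k : ℕ, ((adjoint PS) ^ k) ∘L A ∘L (PT ^ k) = A)
    (Q2S : K →L[ℂ] K)
    (hQ2S : ∀ y : K, Tendsto
      (fun k : ℕ => (((adjoint PS) ^ k) ∘L (PS ^ k)) y) atTop (𝓝 (Q2S y)))
    (QS : K →L[ℂ] K) (hQSpos : QS.IsPositive) (hQSsq : QS * QS = Q2S) :
    ∀ y : K, ‖adjoint A y‖ ≤ ‖QS y‖ := by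
  have hQSsa : adjoint QS = QS := hQSpos.isSelfAdjoint
  -- step a : ‖A* y‖ ≤ ‖PS^k y‖
  have hstep : ∀ (k : ℕ) (y : K), ‖adjoint A y‖ ≤ ‖(PS ^ k) y‖ := by
    intro k y
    have h1 : adjoint A = (adjoint (PT ^ k)) ∘L (adjoint A) ∘L (PS ^ k) := by
      conv_lhs => rw [← hA k]
      rw [adjoint_comp, adjoint_comp]
      simp only [star_pow, ← star_eq_adjoint, star_star, ContinuousLinearMap.comp_assoc]
    rw [h1]
    calc ‖(adjoint (PT ^ k)) ((adjoint A) ((PS ^ k) y))‖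
        ≤ ‖adjoint (PT ^ k)‖ * ‖(adjoint A) ((PS ^ k) y)‖ := le_opNorm _ _
      _ ≤ 1 * ‖(adjoint A) ((PS ^ k) y)‖ := by
          gcongr
          exact (LinearIsometryEquiv.norm_map adjoint (PT ^ k)).le.trans (aux_pow_norm_le PT hPT k)
      _ ≤ 1 * (‖adjoint A‖ * ‖(PS ^ k) y‖) := by gcongr; exact le_opNorm _ _
      _ ≤ 1 * (1 * ‖(PS ^ k) y‖) := by
          gcongr
          exact (LinearIsometryEquiv.norm_map adjoint A).le.trans hAnorm
      _ = ‖(PS ^ k) y‖ := by ring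
  intro y
  have hpa : ∀ k : ℕ, (adjoint PS) ^ k = adjoint (PS ^ k) := by
    intro k
    rw [← star_eq_adjoint PS, ← star_pow, star_eq_adjoint]
  have hterm : ∀ k : ℕ,
      RCLike.re (inner ℂ ((((adjoint PS) ^ k) ∘L (PS ^ k)) y) y : ℂ) = ‖(PS ^ k) y‖ ^ 2 := by
    intro k
    rw [ContinuousLinearMap.comp_apply, hpa k, adjoint_inner_left]
    exact inner_self_eq_norm_sq _
  have hlim : Tendsto (fun k : ℕ =>
      RCLike.re (inner ℂ ((((adjoint PS) ^ k) ∘L (PS ^ k)) y) y : ℂ)) atTop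
      (𝓝 (RCLike.re (inner ℂ (Q2S y) y : ℂ))) :=
    (Complex.continuous_re.tendsto _).comp ((hQ2S y).inner tendsto_const_nhds)
  have hQ2 : RCLike.re (inner ℂ (Q2S y) y : ℂ) = ‖QS y‖ ^ 2 := by
    have hsym := isSelfAdjoint_iff_isSymmetric.mp hQSpos.isSelfAdjoint
    rw [← hQSsq, ContinuousLinearMap.mul_apply]
    have h2 : (inner ℂ (QS (QS y)) y : ℂ) = inner ℂ (QS y) (QS y) := hsym (QS y) y
    rw [h2]
    exact inner_self_eq_norm_sq _
  have hsq : ‖adjoint A y‖ ^ 2 ≤ ‖QS y‖ ^ 2 := by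
    rw [← hQ2]
    refine ge_of_tendsto' hlim fun k => ?_
    rw [hterm k]
    have := hstep k y
    nlinarith [norm_nonneg (adjoint A y), norm_nonneg ((PS ^ k) y)]
  nlinarith [norm_nonneg (adjoint A y), norm_nonneg (QS y)]


/-- If `A` is a contraction with `P_S^{*k} A P_T^k = A` for all `k`, then
`AA* ≤ Q_S² = SOT-lim P_S^{*k} P_S^k`, and hence by Douglas' factorization
there is a contraction `C` with values in `closure(Ran Q_S)` and `A = Q_S C`. -/
theorem douglas_factorization_of_invariant_contraction
    {H : Type*} [NormedAddCommGroup H] [InnerProductSpace ℂ H] [CompleteSpace H]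
    {K : Type*} [NormedAddCommGroup K] [InnerProductSpace ℂ K] [CompleteSpace K]
    (PT : H →L[ℂ] H) (hPT : ‖PT‖ ≤ 1)
    (PS : K →L[ℂ] K) (hPS : ‖PS‖ ≤ 1)
    (A : H →L[ℂ] K) (hAnorm : ‖A‖ ≤ 1)
    (hA : ∀ k : ℕ, ((adjoint PS) ^ k) ∘L A ∘L (PT ^ k) = A)
    (Q2S : K →L[ℂ] K)
    (hQ2S : ∀ y : K, Tendsto
      (fun k : ℕ => (((adjoint PS) ^ k) ∘L (PS ^ k)) y) atTop (𝓝 (Q2S y)))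
    (QS : K →L[ℂ] K) (hQSpos : QS.IsPositive) (hQSsq : QS * QS = Q2S) :
    (Q2S - A ∘L adjoint A).IsPositive ∧
    ∃ C : H →L[ℂ] K, ‖C‖ ≤ 1 ∧ A = QS ∘L C ∧
      ∀ h : H, C h ∈ closure (Set.range QS) := by
  have hQSsa : adjoint QS = QS := hQSpos.isSelfAdjoint
  have hbd := aux_key_bound PT hPT PS hPS A hAnorm hA Q2S hQ2S QS hQSpos hQSsq
  have hsym := isSelfAdjoint_iff_isSymmetric.mp hQSpos.isSelfAdjoint
  have e1 : ∀ x : K, RCLike.re (inner ℂ (Q2S x) x : ℂ) = ‖QS x‖ ^ 2 := by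
    intro x
    rw [← hQSsq, ContinuousLinearMap.mul_apply]
    have h2 : (inner ℂ (QS (QS x)) x : ℂ) = inner ℂ (QS x) (QS x) := hsym (QS x) x
    rw [h2]
    exact inner_self_eq_norm_sq _
  constructor
  · constructor
    · have h1 : IsSelfAdjoint Q2S := by
        rw [← hQSsq, IsSelfAdjoint, star_mul, hQSpos.isSelfAdjoint.star_eq]
      have h2 : IsSelfAdjoint (A ∘L adjoint A) := by
        rw [IsSelfAdjoint, star_eq_adjoint, adjoint_comp, adjoint_adjoint]
      exact isSelfAdjoint_iff_isSymmetric.mp (h1.sub h2)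
    · intro x
      rw [ContinuousLinearMap.reApplyInnerSelf_apply]
      simp only [ContinuousLinearMap.sub_apply, inner_sub_left, map_sub,
        ContinuousLinearMap.comp_apply]
      have e2 : RCLike.re (inner ℂ (A (adjoint A x)) x : ℂ) = ‖adjoint A x‖ ^ 2 := by
        have h3 : (inner ℂ (A (adjoint A x)) x : ℂ)
            = inner ℂ (adjoint A x) (adjoint A x) := by
          exact (adjoint_inner_right A (adjoint A x) x).symm
        rw [h3]
        exact inner_self_eq_norm_sq _
      rw [e1 x, e2]
      have := hbd x
      nlinarith [norm_nonneg (adjoint A x), norm_nonneg (QS x)]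
  · obtain ⟨C, hC1, hC2, hC3⟩ := aux_douglas QS hQSsa (adjoint A) hbd
    rw [adjoint_adjoint] at hC2
    exact ⟨C, hC1, hC2, hC3⟩
end
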